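/- arXiv:2503.16809 — 14 statements merged into one kernel-verified Lean document; each statement's English description precedes it below -/
import Mathlib

section
/- Let Z_1, ..., Z_n be exchangeable real-valued random variables, and let Q̂_n(α) denote the empirical α-quantile of Z_1, ..., Z_n (the ⌈nα⌉-th order statistic). Then for any α ∈ (0,1), P(Z_n ≤ Q̂_n(α)) ≥ α. -/
open MeasureTheory

/-- Empirical `a`-quantile of `z₁,…,z_m` (as in the paper:
`inf {q : (1/m) #{i : z i ≤ q} ≥ a}`), valued in `EReal` so that it is `⊤`
when no such `q` exists. -/
noncomputable def empQuantile (m : ℕ) (z : Fin m → ℝ) (a : ℝ) : EReal :=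
  sInf {q : EReal | a ≤ ((Finset.univ.filter (fun i => (z i : EReal) ≤ q)).card : ℝ) / m}

/-! The empirical quantile is attained: it is the least sample value `q` with
`#{i | z i ≤ q} ≥ α m`, so at least `α m` of the `m` indices satisfy `z i ≤ Q̂`. The quantile
is a symmetric function of the sample, so by exchangeability every event `Z i ≤ Q̂` has the
probability of `Z_last ≤ Q̂`, and summing over `i` gives
`m · P(Z_last ≤ Q̂) = E #{i | Z i ≤ Q̂} ≥ α m`. -/

open Finset
open scoped ENNReal

theorem sInf_mem_of_finite_of_forall_exists_le {β : Type*} [CompleteLinearOrder β]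
    {S T : Set β} (hT : T.Finite) (hTS : T ⊆ S) (hST : ∀ s ∈ S, ∃ t ∈ T, t ≤ s)
    (hS : S.Nonempty) : sInf S ∈ S := by
  obtain ⟨s, hs⟩ := hS
  obtain ⟨t, ht, -⟩ := hST s hs
  have hInf : sInf S = sInf T :=
    le_antisymm (sInf_le_sInf hTS) <| le_sInf fun s hs ↦
      let ⟨t, ht, hts⟩ := hST s hs
      (sInf_le ht).trans hts
  exact hInf ▸ hTS (Set.Nonempty.csInf_mem ⟨t, ht⟩ hT)

section CountBelow

variable {ι β : Type*} [Fintype ι] [CompleteLinearOrder β] (z : ι → β)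

theorem exists_filter_le_eq_filter_le {q : β} (h : ∃ i, z i ≤ q) :
    ∃ j, z j ≤ q ∧ univ.filter (fun i ↦ z i ≤ z j) = univ.filter (fun i ↦ z i ≤ q) := by
  obtain ⟨j, hj, hmax⟩ := exists_max_image (univ.filter fun i ↦ z i ≤ q) z
    (by simpa [filter_nonempty_iff] using h)
  rw [mem_filter] at hj
  refine ⟨j, hj.2, Finset.ext fun i ↦ ?_⟩
  simp only [mem_filter, mem_univ, true_and]
  exact ⟨fun hi ↦ hi.trans hj.2, fun hi ↦ hmax i (by simpa using hi)⟩

theorem sInf_setOf_le_card_filter_le_mem {c : ℝ} (hc : 0 < c)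
    (hne : ∃ q, c ≤ #{i | z i ≤ q}) :
    sInf {q | c ≤ #{i | z i ≤ q}} ∈ {q | c ≤ #{i | z i ≤ q}} := by
  refine sInf_mem_of_finite_of_forall_exists_le ((Set.finite_range z).inter_of_right _)
    Set.inter_subset_left (fun s hs ↦ ?_) hne
  have hpos : 0 < #{i | z i ≤ s} := by exact_mod_cast hc.trans_le hs
  obtain ⟨j, hjs, hj⟩ :=
    exists_filter_le_eq_filter_le z (by simpa [filter_nonempty_iff] using card_pos.mp hpos)
  exact ⟨z j, ⟨by rwa [Set.mem_ofPred_eq, hj], j, rfl⟩, hjs⟩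

end CountBelow

theorem empQuantile_eq_sInf {m : ℕ} (hm : m ≠ 0) (z : Fin m → ℝ) (a : ℝ) :
    empQuantile m z a = sInf {q : EReal | a * m ≤ #{i | (z i : EReal) ≤ q}} := by
  have hm' : (0 : ℝ) < m := by positivity
  simp only [empQuantile, le_div_iff₀ hm']

theorem mul_le_card_filter_le_empQuantile {m : ℕ} (hm : m ≠ 0) (z : Fin m → ℝ) {a : ℝ}
    (ha : a ≤ 1) : a * m ≤ #{i | (z i : EReal) ≤ empQuantile m z a} := by
  rcases le_or_gt a 0 with ha₀ | ha₀
  · exact (mul_nonpos_of_nonpos_of_nonneg ha₀ m.cast_nonneg).trans (Nat.cast_nonneg _)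
  rw [empQuantile_eq_sInf hm]
  refine sInf_setOf_le_card_filter_le_mem _ (mul_pos ha₀ (by positivity)) ⟨⊤, ?_⟩
  simpa using mul_le_of_le_one_left m.cast_nonneg ha

theorem empQuantile_comp_perm {m : ℕ} (z : Fin m → ℝ) (a : ℝ) (σ : Equiv.Perm (Fin m)) :
    empQuantile m (z ∘ σ) a = empQuantile m z a := by
  have hcard (q : EReal) : #{i | ((z ∘ σ) i : EReal) ≤ q} = #{i | (z i : EReal) ≤ q} := by
    simp only [card_filter]
    exact Equiv.sum_comp σ fun i ↦ if (z i : EReal) ≤ q then 1 else 0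
  simp only [empQuantile, hcard]

theorem empQuantile_lt_iff {m : ℕ} (z : Fin m → ℝ) (a : ℝ) (t : EReal) :
    empQuantile m z a < t ↔
      ∃ x : ℚ, ((x : ℝ) : EReal) < t ∧ a ≤ (#{i | z i ≤ (x : ℝ)} : ℝ) / m := by
  simp only [empQuantile, sInf_lt_iff, Set.mem_ofPred_eq]
  constructor
  · rintro ⟨q, hq, hqt⟩
    obtain ⟨x, hqx, hxt⟩ := EReal.exists_rat_btwn_of_lt hqt
    refine ⟨x, hxt, hq.trans ?_⟩
    gcongr with i
    exact fun hi ↦ EReal.coe_le_coe_iff.mp (hi.trans hqx.le)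
  · rintro ⟨x, hxt, hx⟩
    exact ⟨_, by simpa using hx, hxt⟩

theorem measurable_card_filter_le {ι : Type*} [Fintype ι] (r : ℝ) :
    Measurable fun v : ι → ℝ ↦ #{i | v i ≤ r} := by
  simp only [card_filter]
  exact Finset.measurable_sum _ fun i _ ↦
    Measurable.ite (measurableSet_le (measurable_pi_apply i) measurable_const)
      measurable_const measurable_const

theorem measurable_empQuantile (m : ℕ) (a : ℝ) :
    Measurable fun z : Fin m → ℝ ↦ empQuantile m z a := by
  refine measurable_of_Iio fun t ↦ ?_
  have hpre : (fun z ↦ empQuantile m z a) ⁻¹' Set.Iio t =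
      ⋃ x : ℚ, {_z | ((x : ℝ) : EReal) < t} ∩ {z | a ≤ (#{i | z i ≤ (x : ℝ)} : ℝ) / m} := by
    ext z
    simp [empQuantile_lt_iff]
  rw [hpre]
  refine .iUnion fun x ↦ .inter (.const _) (measurableSet_le measurable_const ?_)
  exact (measurable_from_nat.comp (measurable_card_filter_le (x : ℝ))).div_const _

section Measure

variable {Ω : Type*} [MeasurableSpace Ω] {μ : Measure Ω}

theorem measure_preimage_eq_of_map_eq {E : Type*} [MeasurableSpace E] {f g : Ω → E}
    (hf : Measurable f) (hg : Measurable g) (hfg : μ.map f = μ.map g) {B : Set E}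
    (hB : MeasurableSet B) : μ (f ⁻¹' B) = μ (g ⁻¹' B) := by
  rw [← Measure.map_apply hf hB, ← Measure.map_apply hg hB, hfg]

open Classical in
theorem mul_measure_univ_le_sum_measure {ι : Type*} [Fintype ι] {E : ι → Set Ω}
    (hE : ∀ i, MeasurableSet (E i)) {c : ℝ≥0∞} (hc : ∀ ω, c ≤ #{i | ω ∈ E i}) :
    c * μ Set.univ ≤ ∑ i, μ (E i) :=
  calc c * μ Set.univ = ∫⁻ _, c ∂μ := (lintegral_const c).symm
    _ ≤ ∫⁻ ω, (#{i | ω ∈ E i} : ℝ≥0∞) ∂μ := lintegral_mono hc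
    _ = ∫⁻ ω, ∑ i, (E i).indicator 1 ω ∂μ := by
      simp [Set.indicator_apply]
    _ = ∑ i, μ (E i) := by
      rw [lintegral_finsetSum _ fun i _ ↦ measurable_one.indicator (hE i)]
      simp only [lintegral_indicator_one (hE _)]

end Measure

/-- **Quantile lemma.** If `Z₀,…,Z_n` are exchangeable, then the last of them is
below the empirical `α`-quantile of the whole sample with probability at least `α`. -/
theorem quantile_lemma_lower {Ω : Type*} [MeasurableSpace Ω]
    (μ : Measure Ω) [IsProbabilityMeasure μ] (n : ℕ)
    (Z : Fin (n + 1) → Ω → ℝ) (hZ : ∀ i, Measurable (Z i))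
    (hexch : ∀ σ : Equiv.Perm (Fin (n + 1)),
      Measure.map (fun ω i => Z (σ i) ω) μ = Measure.map (fun ω i => Z i ω) μ)
    (α : ℝ) (hα : α ∈ Set.Ioo (0 : ℝ) 1) :
    ENNReal.ofReal α ≤
      μ {ω | (Z (Fin.last n) ω : EReal) ≤ empQuantile (n + 1) (fun i => Z i ω) α} := by
  classical
  let V : Ω → Fin (n + 1) → ℝ := fun ω i ↦ Z i ω
  let B (i : Fin (n + 1)) : Set (Fin (n + 1) → ℝ) := {v | (v i : EReal) ≤ empQuantile (n + 1) v α}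
  have hV : Measurable V := measurable_pi_lambda _ hZ
  have hB (i) : MeasurableSet (B i) :=
    measurableSet_le (measurable_coe_real_ereal.comp (measurable_pi_apply i))
      (measurable_empQuantile _ _)
  have hB_swap (i) : B i = (· ∘ Equiv.swap i (Fin.last n)) ⁻¹' B (Fin.last n) := by
    ext v
    simp [B, empQuantile_comp_perm]
  have hE (i) : μ (V ⁻¹' B i) = μ (V ⁻¹' B (Fin.last n)) := by
    rw [hB_swap i, ← Set.preimage_comp]
    exact measure_preimage_eq_of_map_eq (measurable_pi_lambda _ fun j ↦ hZ _) hV (hexch _) (hB _)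
  have hcount (ω) : ENNReal.ofReal α * (n + 1 : ℕ) ≤ #{i | ω ∈ V ⁻¹' B i} := by
    rw [← ENNReal.ofReal_natCast, ← ENNReal.ofReal_mul hα.1.le, ← ENNReal.ofReal_natCast]
    convert ENNReal.ofReal_le_ofReal
      (mul_le_card_filter_le_empQuantile n.add_one_ne_zero (V ω) hα.2.le)
    exact Iff.rfl
  have hsum := mul_measure_univ_le_sum_measure (μ := μ) (fun i ↦ hV (hB i)) hcount
  rw [measure_univ, mul_one, Fintype.sum_congr _ _ hE, sum_const, card_univ, Fintype.card_fin,
    nsmul_eq_mul'] at hsum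
  exact (ENNReal.mul_le_mul_iff_left (by simp) (by simp)).mp hsum
end

section
/- Let Z_1, ..., Z_n be exchangeable real-valued random variables that are almost surely distinct, and let Q̂_n(α) be the empirical α-quantile (the ⌈nα⌉-th order statistic). Then for any α ∈ (0,1), P(Z_n ≤ Q̂_n(α)) ≤ α + 1/n. -/
open MeasureTheory

/-!
A point lies below the empirical `α`-quantile only if fewer than `m * α` sample points lie
strictly below it. For distinct points at most `⌈m * α⌉` indices have fewer than `⌈m * α⌉`
points strictly below them, and by exchangeability every index has this property with the
same probability, which is therefore at most `⌈m * α⌉ / m ≤ α + 1 / m`.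
-/

open Finset ENNReal

section StrictRank

variable {ι β : Type*} [Fintype ι] [LinearOrder β]

def strictRank (z : ι → β) (i : ι) : ℕ := #{j | z j < z i}

lemma strictRank_comp_perm (z : ι → β) (σ : Equiv.Perm ι) (i : ι) :
    strictRank (fun j => z (σ j)) i = strictRank z (σ i) := by
  simp only [strictRank, card_filter]
  exact Equiv.sum_comp σ (fun j => if z j < z (σ i) then 1 else 0)

lemma card_strictRank_lt_le {z : ι → β} (hz : Function.Injective z) (k : ℕ) :
    #{i | strictRank z i < k} ≤ k := by
  classical
  set T : Finset ι := {i | strictRank z i < k}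
  obtain hT | hT := T.eq_empty_or_nonempty
  · simp [hT]
  obtain ⟨i, hiT, himax⟩ := T.exists_max_image z hT
  have hbelow : T.erase i ⊆ ({j | z j < z i} : Finset ι) := fun j hj => by
    obtain ⟨hji, hjT⟩ := mem_erase.mp hj
    exact mem_filter.mpr ⟨mem_univ j, (himax j hjT).lt_of_ne (hz.ne hji)⟩
  have hi : strictRank z i < k := (mem_filter.mp hiT).2
  have := card_le_card hbelow
  rw [card_erase_of_mem hiT] at this
  change _ ≤ strictRank z i at this
  omega

lemma measurable_strictRank (i : ι) :
    Measurable fun v : ι → ℝ => strictRank v i := by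
  simp only [strictRank, card_filter]
  exact Finset.measurable_sum _ fun j _ =>
    Measurable.ite (measurableSet_lt (measurable_pi_apply j) (measurable_pi_apply i))
      measurable_const measurable_const

end StrictRank

lemma strictRank_lt_ceil_of_le_empQuantile {m : ℕ} {z : Fin m → ℝ} {α : ℝ} {i : Fin m}
    (h : (z i : EReal) ≤ empQuantile m z α) : strictRank z i < ⌈(m : ℝ) * α⌉₊ := by
  rw [Nat.lt_ceil]
  by_contra! hk
  set L : Finset (Fin m) := {j | z j < z i}
  -- `w` is the largest sample point below `z i`, or `⊥` if there is none.
  set w : EReal := L.sup fun j => (z j : EReal)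
  have hLw : L ⊆ ({j | (z j : EReal) ≤ w} : Finset (Fin m)) := fun j hj =>
    mem_filter.mpr ⟨mem_univ j, le_sup (f := fun j => (z j : EReal)) hj⟩
  have hm : (0 : ℝ) < m := by exact_mod_cast Fin.pos i
  have hQw : empQuantile m z α ≤ w := by
    refine sInf_le ?_
    change α ≤ _
    rw [le_div_iff₀ hm]
    calc α * m ≤ #L := by rw [mul_comm]; exact hk
      _ ≤ _ := by exact_mod_cast card_le_card hLw
  have hwz : w < z i := (Finset.sup_lt_iff (EReal.bot_lt_coe _)).mpr fun j hj =>
    EReal.coe_lt_coe_iff.mpr (mem_filter.mp hj).2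
  exact not_le.mpr hwz (h.trans hQw)

def Exchangeable {ι Ω : Type*} [MeasurableSpace Ω] (μ : Measure Ω) (Z : ι → Ω → ℝ) : Prop :=
  ∀ σ : Equiv.Perm ι, μ.map (fun ω i => Z (σ i) ω) = μ.map (fun ω i => Z i ω)

section Probability

variable {ι Ω : Type*} [MeasurableSpace Ω] {μ : Measure Ω} {Z : ι → Ω → ℝ}

lemma Exchangeable.measure_preimage_comp_perm (hexch : Exchangeable μ Z)
    (hZ : ∀ i, Measurable (Z i)) (σ : Equiv.Perm ι) {S : Set (ι → ℝ)} (hS : MeasurableSet S) :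
    μ ((fun ω i => Z (σ i) ω) ⁻¹' S) = μ ((fun ω i => Z i ω) ⁻¹' S) := by
  rw [← Measure.map_apply (measurable_pi_lambda _ fun i => hZ (σ i)) hS, hexch σ,
    Measure.map_apply (measurable_pi_lambda _ hZ) hS]

lemma ae_injective_of_measure_eq_null [Countable ι]
    (hdist : ∀ i j, i ≠ j → μ {ω | Z i ω = Z j ω} = 0) :
    ∀ᵐ ω ∂μ, Function.Injective fun i => Z i ω := by
  have hpair : ∀ᵐ ω ∂μ, ∀ i j, i ≠ j → Z i ω ≠ Z j ω := by
    refine ae_all_iff.mpr fun i => ae_all_iff.mpr fun j => ?_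
    by_cases hij : i = j
    · exact ae_of_all _ fun _ h => absurd hij h
    · filter_upwards [measure_eq_zero_iff_ae_notMem.mp (hdist i j hij)] with ω hω
      exact fun _ => hω
  filter_upwards [hpair] with ω hω i j hZij
  by_contra hij
  exact hω i j hij hZij

open Classical in
lemma sum_measure_le_of_ae_card_le [Fintype ι] {A : ι → Set Ω} (hA : ∀ i, MeasurableSet (A i))
    {k : ℕ} (hk : ∀ᵐ ω ∂μ, #{i | ω ∈ A i} ≤ k) : ∑ i, μ (A i) ≤ k * μ Set.univ := by
  have hcount : ∀ ω, ∑ i, (A i).indicator 1 ω = (#{i | ω ∈ A i} : ℝ≥0∞) := fun ω => by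
    simp only [Set.indicator_apply, Pi.one_apply, sum_boole]
  calc ∑ i, μ (A i) = ∫⁻ ω, ∑ i, (A i).indicator 1 ω ∂μ := by
        rw [lintegral_finsetSum _ fun i _ => measurable_one.indicator (hA i)]
        simp [lintegral_indicator_one (hA _)]
    _ ≤ ∫⁻ _, (k : ℝ≥0∞) ∂μ := lintegral_mono_ae <| hk.mono fun ω hω => by
        rw [hcount]; exact_mod_cast hω
    _ = k * μ Set.univ := lintegral_const _

end Probability

lemma natCast_ceil_mul_div_le (m : ℕ) (hm : 0 < m) (α : ℝ) :
    (⌈(m : ℝ) * α⌉₊ : ℝ≥0∞) / m ≤ ENNReal.ofReal (α + 1 / m) := by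
  rcases le_or_gt α 0 with hα | hα
  · simp [Nat.ceil_eq_zero.mpr (mul_nonpos_of_nonneg_of_nonpos (Nat.cast_nonneg m) hα)]
  have hm' : (0 : ℝ) < m := by exact_mod_cast hm
  rw [← ENNReal.ofReal_natCast, ← ENNReal.ofReal_natCast m, ← ENNReal.ofReal_div_of_pos hm']
  refine ENNReal.ofReal_le_ofReal ?_
  rw [div_le_iff₀ hm', add_mul, one_div_mul_cancel hm'.ne', mul_comm]
  exact (Nat.ceil_lt_add_one (by positivity)).le

theorem quantile_lemma_upper_general {Ω : Type*} [MeasurableSpace Ω]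
    (μ : Measure Ω) [IsProbabilityMeasure μ] (n : ℕ)
    (Z : Fin (n + 1) → Ω → ℝ) (hZ : ∀ i, Measurable (Z i))
    (hexch : ∀ σ : Equiv.Perm (Fin (n + 1)),
      Measure.map (fun ω i => Z (σ i) ω) μ = Measure.map (fun ω i => Z i ω) μ)
    (hdist : ∀ i j : Fin (n + 1), i ≠ j → μ {ω | Z i ω = Z j ω} = 0)
    (α : ℝ) :
    μ {ω | (Z (Fin.last n) ω : EReal) ≤ empQuantile (n + 1) (fun i => Z i ω) α} ≤
      ENNReal.ofReal (α + 1 / (n + 1)) := by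
  classical
  set k := ⌈((n + 1 : ℕ) : ℝ) * α⌉₊
  set A : Fin (n + 1) → Set Ω := fun i => (fun ω j => Z j ω) ⁻¹' {v | strictRank v i < k}
  have hA : ∀ i, MeasurableSet (A i) := fun i =>
    measurable_pi_lambda _ hZ (measurable_strictRank i measurableSet_Iio)
  have hA_eq : ∀ i, μ (A i) = μ (A (Fin.last n)) := fun i => by
    have hσ : A i = (fun ω j => Z (Equiv.swap (Fin.last n) i j) ω) ⁻¹'
        {v | strictRank v (Fin.last n) < k} := by
      ext ω
      simp only [A, Set.mem_preimage, Set.mem_ofPred_eq, strictRank_comp_perm (fun j => Z j ω),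
        Equiv.swap_apply_left]
    rw [hσ, Exchangeable.measure_preimage_comp_perm hexch hZ _
      (S := {v | strictRank v (Fin.last n) < k}) (measurable_strictRank _ measurableSet_Iio)]
  have hsum : ∑ i, μ (A i) ≤ k := by
    simpa using sum_measure_le_of_ae_card_le hA <|
      (ae_injective_of_measure_eq_null hdist).mono fun ω hω => by
        convert card_strictRank_lt_le hω k; rfl
  have hA_last : μ (A (Fin.last n)) ≤ k / (n + 1 : ℕ) := by
    rw [ENNReal.le_div_iff_mul_le (by simp) (by simp), mul_comm]
    simpa [hA_eq] using hsum
  calc μ {ω | (Z (Fin.last n) ω : EReal) ≤ empQuantile (n + 1) (fun i => Z i ω) α}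
      ≤ μ (A (Fin.last n)) := measure_mono fun ω hω => strictRank_lt_ceil_of_le_empQuantile hω
    _ ≤ k / (n + 1 : ℕ) := hA_last
    _ ≤ ENNReal.ofReal (α + 1 / (n + 1 : ℕ)) := natCast_ceil_mul_div_le (n + 1) n.succ_pos α
    _ = ENNReal.ofReal (α + 1 / (n + 1)) := by rw [Nat.cast_add_one]

/-- **Quantile lemma, upper bound.** If `Z₀,…,Z_n` are exchangeable and almost surely
distinct, then the last of them is below the empirical `α`-quantile of the whole sample
with probability at most `α + 1/(n+1)`. -/
theorem quantile_lemma_upper {Ω : Type*} [MeasurableSpace Ω]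
    (μ : Measure Ω) [IsProbabilityMeasure μ] (n : ℕ)
    (Z : Fin (n + 1) → Ω → ℝ) (hZ : ∀ i, Measurable (Z i))
    (hexch : ∀ σ : Equiv.Perm (Fin (n + 1)),
      Measure.map (fun ω i => Z (σ i) ω) μ = Measure.map (fun ω i => Z i ω) μ)
    (hdist : ∀ i j : Fin (n + 1), i ≠ j → μ {ω | Z i ω = Z j ω} = 0)
    (α : ℝ) (hα : α ∈ Set.Ioo (0 : ℝ) 1) :
    μ {ω | (Z (Fin.last n) ω : EReal) ≤ empQuantile (n + 1) (fun i => Z i ω) α} ≤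
      ENNReal.ofReal (α + 1 / (n + 1)) :=
  quantile_lemma_upper_general μ n Z hZ hexch hdist α
end

section
/- Let Z_1, ..., Z_{n+1} be exchangeable, almost surely distinct real-valued random variables and let Q̂_n denote the empirical quantile of the first n. Then for any α ∈ (0,1), P(Z_{n+1} ≤ Q̂_n((1 + 1/n)α)) ≤ α + 1/(n+1). -/
/-!
Let `R_i = #{l | Z_l < Z_i}` be the rank of `Z_i` among all `n + 1` variables, and
`k = ⌈n · (1 + 1/n) α⌉ = ⌈(n + 1) α⌉`. The event `Z_{n+1} ≤ Q̂_n((1 + 1/n) α)` is exactly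
`R_{n+1} < k`. By exchangeability all events `R_i < k` have the same probability, and since the
ranks of distinct values are a permutation of `0, …, n`, exactly `min k (n + 1)` of them occur
almost surely. Hence `(n + 1) P(R_{n+1} < k) = min k (n + 1) ≤ k < (n + 1) α + 1`.
-/

open MeasureTheory

open Finset Filter Topology
open scoped ENNReal

section Rank

variable {ι α : Type*} [Fintype ι] [LinearOrder α]

def rank (v : ι → α) (i : ι) : ℕ := #{l | v l < v i}

theorem rank_comp_perm (v : ι → α) (σ : Equiv.Perm ι) (i : ι) :
    rank (v ∘ σ) i = rank v (σ i) :=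
  card_equiv σ (by simp)

theorem rank_last {n : ℕ} (v : Fin (n + 1) → α) :
    rank v (Fin.last n) = #{i : Fin n | v i.castSucc < v (Fin.last n)} := by
  simp only [rank, card_filter, Fin.sum_univ_castSucc, lt_irrefl, if_false, add_zero]

theorem rank_lt_rank {v : ι → α} {i j : ι} (h : v i < v j) : rank v i < rank v j := by
  refine card_lt_card ((ssubset_iff_of_subset fun l hl => ?_).2 ⟨i, by simpa using h, by simp⟩)
  simp only [mem_filter, mem_univ, true_and] at hl ⊢
  exact hl.trans h

theorem rank_lt_card (v : ι → α) (i : ι) : rank v i < Fintype.card ι :=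
  card_lt_univ_of_notMem (x := i) (by simp)

theorem rank_injective {v : ι → α} (hv : Function.Injective v) : Function.Injective (rank v) := by
  intro i j h
  by_contra hne
  rcases lt_or_gt_of_ne (hv.ne hne) with hlt | hlt
  · exact (rank_lt_rank hlt).ne h
  · exact (rank_lt_rank hlt).ne' h

theorem image_rank {v : ι → α} (hv : Function.Injective v) :
    univ.image (rank v) = range (Fintype.card ι) :=
  eq_of_subset_of_card_le (fun r hr => by
      obtain ⟨i, -, rfl⟩ := mem_image.1 hr
      exact mem_range.2 (rank_lt_card v i))
    (by rw [card_image_of_injective _ (rank_injective hv)]; simp)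

theorem card_rank_lt {v : ι → α} (hv : Function.Injective v) (k : ℕ) :
    #{i | rank v i < k} = min k (Fintype.card ι) := by
  rw [← card_image_of_injective _ (rank_injective hv), ← filter_image (p := (· < k)), image_rank hv,
    show (range (Fintype.card ι)).filter (· < k) = range (min k (Fintype.card ι)) by
      ext; simp [and_comm], card_range]

end Rank

theorem exists_lt_forall_le_of_lt {ι : Type*} [Finite ι] (z : ι → ℝ) (x : ℝ) :
    ∃ y < x, ∀ i, z i < x → z i ≤ y := by
  have hbelow : ∀ i, ∀ᶠ y in 𝓝[<] x, z i < x → z i ≤ y := fun i => by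
    by_cases h : z i < x
    · exact ((eventually_gt_nhds h).filter_mono nhdsWithin_le_nhds).mono fun y hy _ => hy.le
    · exact Eventually.of_forall fun y h' => absurd h' h
  exact ((eventually_nhdsWithin_of_forall fun y hy => hy).and (eventually_all.2 hbelow)).exists

theorem coe_le_empQuantile_iff {m : ℕ} (hm : 0 < m) (z : Fin m → ℝ) (x a : ℝ) :
    (x : EReal) ≤ empQuantile m z a ↔ #{i | z i < x} < ⌈m * a⌉₊ := by
  have hmem : ∀ q : EReal,
      a ≤ (#{i | (z i : EReal) ≤ q} : ℝ) / m ↔ ⌈m * a⌉₊ ≤ #{i | (z i : EReal) ≤ q} := fun q => by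
    rw [le_div_iff₀ (by positivity), mul_comm, Nat.ceil_le]
  simp only [empQuantile, le_sInf_iff, Set.mem_ofPred_eq, hmem]
  constructor
  · intro h
    by_contra! hk
    obtain ⟨y, hyx, hy⟩ := exists_lt_forall_le_of_lt z x
    refine (EReal.coe_le_coe_iff.1 (h y (hk.trans (card_le_card fun i hi => ?_)))).not_gt hyx
    simp only [mem_filter, mem_univ, true_and] at hi ⊢
    exact_mod_cast hy i hi
  · intro hk q hq
    by_contra! hqx
    refine hk.not_ge (hq.trans (card_le_card fun i hi => ?_))
    simp only [mem_filter, mem_univ, true_and] at hi ⊢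
    exact_mod_cast hi.trans_lt hqx

section Exchangeable

variable {ι Ω : Type*} [Fintype ι] [MeasurableSpace Ω] {μ : Measure Ω} {Z : ι → Ω → ℝ}

theorem measurable_rank (i : ι) : Measurable fun v : ι → ℝ => rank v i := by
  simp only [rank, card_filter]
  exact Finset.measurable_sum _ fun l _ =>
    Measurable.ite (measurableSet_lt (measurable_pi_apply l) (measurable_pi_apply i))
      measurable_const measurable_const

theorem measurableSet_rank_lt (hZ : ∀ i, Measurable (Z i)) (i : ι) (k : ℕ) :
    MeasurableSet {ω | rank (fun l => Z l ω) i < k} :=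
  measurableSet_lt ((measurable_rank i).comp (measurable_pi_lambda _ hZ)) measurable_const

theorem measure_rank_lt_eq_of_exchangeable [DecidableEq ι] (hZ : ∀ i, Measurable (Z i))
    (hexch : ∀ σ : Equiv.Perm ι,
      Measure.map (fun ω i => Z (σ i) ω) μ = Measure.map (fun ω i => Z i ω) μ)
    (i j : ι) (k : ℕ) :
    μ {ω | rank (fun l => Z l ω) i < k} = μ {ω | rank (fun l => Z l ω) j < k} := by
  have hB : MeasurableSet {v : ι → ℝ | rank v j < k} :=
    measurableSet_lt (measurable_rank j) measurable_const
  have hswap : (fun ω l => Z (Equiv.swap i j l) ω) ⁻¹' {v | rank v j < k} =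
      {ω | rank (fun l => Z l ω) i < k} := by
    ext ω
    change rank ((fun l => Z l ω) ∘ Equiv.swap i j) j < k ↔ rank (fun l => Z l ω) i < k
    rw [rank_comp_perm, Equiv.swap_apply_right]
  have h := congrArg (· {v : ι → ℝ | rank v j < k}) (hexch (Equiv.swap i j))
  rw [Measure.map_apply (measurable_pi_lambda _ fun l => hZ _) hB,
    Measure.map_apply (measurable_pi_lambda _ hZ) hB, hswap] at h
  exact h

theorem ae_injective_of_measure_eq_zero
    (hdist : ∀ i j : ι, i ≠ j → μ {ω | Z i ω = Z j ω} = 0) :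
    ∀ᵐ ω ∂μ, Function.Injective fun l => Z l ω := by
  have hne : ∀ᵐ ω ∂μ, ∀ i j : ι, i ≠ j → Z i ω ≠ Z j ω := by
    simp only [ae_all_iff]
    exact fun i j hij => ae_iff.2 (by simpa using hdist i j hij)
  exact hne.mono fun ω h i j hij => by_contra fun hne => h i j hne hij

theorem sum_measure_rank_lt [IsProbabilityMeasure μ] (hZ : ∀ i, Measurable (Z i))
    (hinj : ∀ᵐ ω ∂μ, Function.Injective fun l => Z l ω) (k : ℕ) :
    ∑ i, μ {ω | rank (fun l => Z l ω) i < k} = min k (Fintype.card ι) := by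
  have hE := measurableSet_rank_lt hZ (k := k)
  calc ∑ i, μ {ω | rank (fun l => Z l ω) i < k}
      = ∫⁻ ω, ∑ i, {ω | rank (fun l => Z l ω) i < k}.indicator 1 ω ∂μ := by
        rw [lintegral_finsetSum _ fun i _ => measurable_one.indicator (hE i)]
        simp only [lintegral_indicator_one (hE _)]
    _ = ∫⁻ _, (min k (Fintype.card ι) : ℕ) ∂μ := lintegral_congr_ae <| hinj.mono fun ω hω => by
        simp only [Set.indicator_apply, Set.mem_ofPred_eq, Pi.one_apply, sum_boole,
          card_rank_lt hω]
    _ = min k (Fintype.card ι) := by simp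

end Exchangeable

theorem le_ofReal_of_natCast_mul_le {m j : ℕ} (hm : 0 < m) {p : ℝ≥0∞} {b : ℝ}
    (hp : (m : ℝ≥0∞) * p ≤ j) (hj : (j : ℝ) ≤ m * b) : p ≤ ENNReal.ofReal b := by
  rw [← ENNReal.mul_le_mul_iff_right (a := m) (by simpa using hm.ne') (by simp)]
  calc (m : ℝ≥0∞) * p ≤ j := hp
    _ = ENNReal.ofReal j := (ENNReal.ofReal_natCast j).symm
    _ ≤ ENNReal.ofReal (m * b) := ENNReal.ofReal_le_ofReal hj
    _ = m * ENNReal.ofReal b := by rw [ENNReal.ofReal_mul m.cast_nonneg, ENNReal.ofReal_natCast]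

/-- **Quantile inflation, upper bound.** If `Z₁,…,Z_{n+1}` are exchangeable and almost
surely distinct, then `P(Z_{n+1} ≤ Q̂_n((1 + 1/n)α)) ≤ α + 1/(n+1)`, where `Q̂_n` is the
empirical quantile of the first `n` variables. -/
theorem quantile_inflation_upper {Ω : Type*} [MeasurableSpace Ω]
    (μ : Measure Ω) [IsProbabilityMeasure μ] (n : ℕ) (hn : 0 < n)
    (Z : Fin (n + 1) → Ω → ℝ) (hZ : ∀ i, Measurable (Z i))
    (hexch : ∀ σ : Equiv.Perm (Fin (n + 1)),
      Measure.map (fun ω i => Z (σ i) ω) μ = Measure.map (fun ω i => Z i ω) μ)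
    (hdist : ∀ i j : Fin (n + 1), i ≠ j → μ {ω | Z i ω = Z j ω} = 0)
    (α : ℝ) (hα : α ∈ Set.Ioo (0 : ℝ) 1) :
    μ {ω | (Z (Fin.last n) ω : EReal) ≤
        empQuantile n (fun i : Fin n => Z i.castSucc ω) ((1 + 1 / n) * α)} ≤
      ENNReal.ofReal (α + 1 / (n + 1)) := by
  have hk : (⌈(n : ℝ) * ((1 + 1 / n) * α)⌉₊ : ℝ) < (n + 1) * α + 1 := by
    rw [show (n : ℝ) * ((1 + 1 / n) * α) = (n + 1) * α by field_simp]
    exact Nat.ceil_lt_add_one (mul_pos (by positivity) hα.1).le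
  have hsum := sum_measure_rank_lt hZ (ae_injective_of_measure_eq_zero hdist)
    ⌈(n : ℝ) * ((1 + 1 / n) * α)⌉₊
  simp only [measure_rank_lt_eq_of_exchangeable hZ hexch _ (Fin.last n), sum_const, card_univ,
    Fintype.card_fin, nsmul_eq_mul, rank_last] at hsum
  simp only [coe_le_empQuantile_iff hn]
  refine le_ofReal_of_natCast_mul_le n.add_one_pos
    (hsum.trans_le (Nat.cast_le.2 (min_le_left _ _))) ?_
  rw [Nat.cast_succ, mul_add, mul_one_div_cancel (by positivity)]
  exact hk.le
end

section
/- Consider the EXPRESS calibration strategy: at time t, index j ∈ {-n,...,t-1} is selected into the calibration set iff S_t(X_j) = 1 and S_i(X_j) = S_i(X_t) for all i ∈ {0,...,t-1}, where {S_i} are decision-driven selection rules; the augmented set D̃_t additionally contains t iff S_t(X_t) = 1. Then for any permutation π of D̃_t, extended by the identity off D̃_t to a permutation π̃ of {-n,...,t}, the selection map is symmetric: Ĩ_t(Z_{-n},...,Z_t) = Ĩ_t(Z_{π̃(-n)},...,Z_{π̃(t)}). -/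
/-- Decision-driven selection rules: the rule at time `t` is a deterministic function
(given by the mechanism `g`) of the past selection decisions. -/
def rules {X : Type*} (g : (t : ℕ) → (Fin t → Bool) → X → Bool) (x : ℕ → X) :
    ℕ → X → Bool
  | t => g t (fun i => rules g x i.1 (x i.1))
  decreasing_by exact i.isLt

/-- The augmented EXPRESS calibration set `D̃_t` at time `t` for data `x : ℤ → X`
(indices `-n,…,t`, negative indices offline): an index `j` is selected iff
`S_t(x_j) = 1` and `S_i(x_j) = S_i(x_t)` for all `i < t`.  (For `j = t` these
conditions reduce to `S_t(x_t) = 1`, so `t ∈ D̃_t` iff the test point is selected.) -/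
def expressSet {X : Type*} (g : (t : ℕ) → (Fin t → Bool) → X → Bool)
    (n t : ℕ) (x : ℤ → X) : Set ℤ :=
  {j : ℤ | -(n : ℤ) ≤ j ∧ j ≤ (t : ℤ) ∧
    rules g (fun k : ℕ => x (k : ℤ)) t (x j) = true ∧
    ∀ i : ℕ, i < t →
      rules g (fun k : ℕ => x (k : ℤ)) i (x j) =
      rules g (fun k : ℕ => x (k : ℤ)) i (x (t : ℤ))}

/-!
Since the rules are decision driven, the rule sequence only depends on the past selection
decisions `S_k(x_k)`, `k < t`. Every member of `D̃_t` has the same rule profile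
`(S_0(x_j), …, S_t(x_j))`, so a permutation of `D̃_t` fixing everything else preserves the
profile of every data point; by induction the rules, and hence `D̃_t`, are unchanged.
-/

section Rules

variable {X : Type*} {g : (t : ℕ) → (Fin t → Bool) → X → Bool}

theorem rules_eq_of_forall_lt {x y : ℕ → X} {t : ℕ}
    (h : ∀ k < t, rules g x k (y k) = rules g x k (x k)) :
    rules g y t = rules g x t := by
  induction t using Nat.strong_induction_on with
  | _ t ih =>
    rw [rules, rules]
    congr 1
    funext ⟨k, hk⟩
    rw [ih k hk fun i hi => h i (hi.trans hk)]
    exact h k hk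

theorem expressSet_rules_eq {n t : ℕ} {x : ℤ → X} {j k : ℤ}
    (hj : j ∈ expressSet g n t x) (hk : k ∈ expressSet g n t x) {i : ℕ} (hi : i ≤ t) :
    rules g (fun m : ℕ => x m) i (x j) = rules g (fun m : ℕ => x m) i (x k) := by
  rcases hi.lt_or_eq with hi | rfl
  · rw [hj.2.2.2 i hi, hk.2.2.2 i hi]
  · rw [hj.2.2.1, hk.2.2.1]

theorem rules_apply_perm_of_mapsTo_expressSet {n t : ℕ} {x : ℤ → X} {π : Equiv.Perm ℤ}
    (hfix : ∀ j : ℤ, j ∉ expressSet g n t x → π j = j)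
    (hmaps : ∀ j : ℤ, j ∈ expressSet g n t x → π j ∈ expressSet g n t x)
    (j : ℤ) {i : ℕ} (hi : i ≤ t) :
    rules g (fun m : ℕ => x m) i (x (π j)) = rules g (fun m : ℕ => x m) i (x j) := by
  by_cases hj : j ∈ expressSet g n t x
  · exact expressSet_rules_eq (hmaps j hj) hj hi
  · rw [hfix j hj]

end Rules

/-- **Symmetry of the EXPRESS strategy.** For any permutation `π` of the augmented
calibration set `D̃_t` (extended by the identity off `D̃_t`), the selection map is
symmetric: `Ĩ_t(Z_{π(-n)},…,Z_{π(t)}) = Ĩ_t(Z_{-n},…,Z_t)`. -/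
theorem expressSet_symmetric {X : Type*}
    (g : (t : ℕ) → (Fin t → Bool) → X → Bool)
    (n t : ℕ) (x : ℤ → X) (π : Equiv.Perm ℤ)
    (hfix : ∀ j : ℤ, j ∉ expressSet g n t x → π j = j)
    (hmaps : ∀ j : ℤ, j ∈ expressSet g n t x → π j ∈ expressSet g n t x) :
    expressSet g n t (fun j => x (π j)) = expressSet g n t x := by
  have hprofile := rules_apply_perm_of_mapsTo_expressSet hfix hmaps
  have hrules : ∀ i ≤ t, rules g (fun m : ℕ => x (π m)) i = rules g (fun m : ℕ => x m) i :=
    fun i hi => rules_eq_of_forall_lt fun k hk => hprofile k (hk.le.trans hi)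
  ext j
  simp only [expressSet, Set.mem_ofPred_eq, hrules t le_rfl, hprofile _ le_rfl]
  refine and_congr_right' <| and_congr_right' <| and_congr_right' <| forall₂_congr fun i hi => ?_
  rw [hrules i hi.le, hprofile j hi.le, hprofile t hi.le]
end

section
/- Let Z_{-n}, ..., Z_t be exchangeable random variables and let Ĩ_t : Z^{N+1} → 2^{{-n,...,t}} be a measurable set-valued selection map satisfying the symmetry property: for every index set D with P(Ĩ_t(Z) = D) > 0 and every permutation π of D, extended by the identity to π̃ on {-n,...,t}, one has Ĩ_t(Z_{π̃(-n)},...,Z_{π̃(t)}) = Ĩ_t(Z_{-n},...,Z_t). Then the selected variables {Z_i}_{i ∈ D̃_t} are exchangeable conditional on {Ĩ_t = D}: for every measurable A ⊆ Z^{|D|} and every permutation π of D, P((Z_i)_{i∈D} ∈ A | Ĩ_t = D) = P((Z_{π(i)})_{i∈D} ∈ A | Ĩ_t = D). -/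
open MeasureTheory ProbabilityTheory

/-! Write `X = (Z_i)_i` and `S = {x | sel x = D}`. By symmetry of `sel`, the event `{X ∈ S}` is
unchanged when `X` is replaced by `X ∘ π`; by exchangeability `X ∘ π` has the law of `X`. Hence
the joint law of `(1_{X ∈ S}, X|_D)` equals that of `(1_{X ∈ S}, (X ∘ π)|_D)`, which is the claim
after dividing by `P(X ∈ S)`. -/

theorem ProbabilityTheory.IdentDistrib.cond_preimage_eq {Ω α : Type*} [MeasurableSpace Ω]
    [MeasurableSpace α] {μ : Measure Ω} {X Y : Ω → α} (h : IdentDistrib X Y μ μ)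
    (hX : Measurable X) {S B : Set α} (hS : MeasurableSet S) (hB : MeasurableSet B)
    (hXY : Y ⁻¹' S = X ⁻¹' S) :
    μ[|X ⁻¹' S] (X ⁻¹' B) = μ[|X ⁻¹' S] (Y ⁻¹' B) := by
  rw [cond_apply (hX hS), cond_apply (hX hS), ← Set.preimage_inter,
    h.measure_mem_eq (hS.inter hB), Set.preimage_inter, hXY]

theorem preimage_comp_perm_setOf_eq {ι E : Type*} (sel : (ι → E) → Finset ι) {D : Finset ι}
    (hsym : ∀ σ : Equiv.Perm ι, (∀ i, i ∉ D → σ i = i) →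
      ∀ x : ι → E, sel x = D → sel (fun i => x (σ i)) = sel x)
    {π : Equiv.Perm ι} (hπ : ∀ i, i ∉ D → π i = i) :
    (fun (x : ι → E) i => x (π i)) ⁻¹' {x | sel x = D} = {x | sel x = D} := by
  have hπinv : ∀ i, i ∉ D → π⁻¹ i = i := fun i hi => Equiv.Perm.inv_eq_iff_eq.mpr (hπ i hi).symm
  ext x
  constructor
  · intro (hx : sel (fun i => x (π i)) = D)
    simpa [hx] using hsym π⁻¹ hπinv _ hx
  · intro (hx : sel x = D)
    exact (hsym π hπ x hx).trans hx

theorem selected_conditionally_exchangeable_general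
    {Ω E : Type*} [MeasurableSpace Ω] [MeasurableSpace E]
    (μ : Measure Ω) {N : ℕ}
    (Z : Fin N → Ω → E) (hZ : ∀ i, Measurable (Z i))
    (sel : (Fin N → E) → Finset (Fin N))
    (hselmeas : ∀ D : Finset (Fin N), MeasurableSet {x : Fin N → E | sel x = D})
    (hexch : ∀ σ : Equiv.Perm (Fin N),
      Measure.map (fun ω i => Z (σ i) ω) μ = Measure.map (fun ω i => Z i ω) μ)
    (hsym : ∀ (D : Finset (Fin N)) (π : Equiv.Perm (Fin N)),
      μ {ω | sel (fun i => Z i ω) = D} ≠ 0 → (∀ i, i ∉ D → π i = i) →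
      ∀ x : Fin N → E, sel x = D → sel (fun i => x (π i)) = sel x)
    (D : Finset (Fin N)) (hD : μ {ω | sel (fun i => Z i ω) = D} ≠ 0)
    (π : Equiv.Perm (Fin N)) (hπ : ∀ i, i ∉ D → π i = i)
    (A : Set ({ i // i ∈ D } → E)) (hA : MeasurableSet A) :
    μ[|{ω | sel (fun i => Z i ω) = D}] {ω | (fun i : { i // i ∈ D } => Z i.1 ω) ∈ A} =
      μ[|{ω | sel (fun i => Z i ω) = D}]
        {ω | (fun i : { i // i ∈ D } => Z (π i.1) ω) ∈ A} := by
  have hX : Measurable fun ω i => Z i ω := measurable_pi_lambda _ hZ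
  have hperm : Measurable fun (x : Fin N → E) i => x (π i) :=
    measurable_pi_lambda _ fun i => measurable_pi_apply (π i)
  have hrestrict : Measurable fun (x : Fin N → E) (i : { i // i ∈ D }) => x i.1 :=
    measurable_pi_lambda _ fun i => measurable_pi_apply i.1
  have hident : IdentDistrib (fun ω i => Z i ω) (fun ω i => Z (π i) ω) μ μ :=
    ⟨hX.aemeasurable, (hperm.comp hX).aemeasurable, (hexch π).symm⟩
  refine hident.cond_preimage_eq hX (hselmeas D) (hrestrict hA) ?_
  exact congrArg (Set.preimage fun ω i => Z i ω) (preimage_comp_perm_setOf_eq sel (fun σ => hsym D σ hD) hπ)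

/-- **Conditional exchangeability of the selected data.** If `Z₁,…,Z_N` are
exchangeable and the selection map `sel` is symmetric (condition (S)), then
conditionally on `{sel = D}`, the selected variables `(Z_i)_{i ∈ D}` are
exchangeable: permuting them within `D` does not change their conditional law. -/
theorem selected_conditionally_exchangeable
    {Ω E : Type*} [MeasurableSpace Ω] [MeasurableSpace E]
    (μ : Measure Ω) [IsProbabilityMeasure μ] {N : ℕ}
    (Z : Fin N → Ω → E) (hZ : ∀ i, Measurable (Z i))
    (sel : (Fin N → E) → Finset (Fin N))
    (hselmeas : ∀ D : Finset (Fin N), MeasurableSet {x : Fin N → E | sel x = D})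
    (hexch : ∀ σ : Equiv.Perm (Fin N),
      Measure.map (fun ω i => Z (σ i) ω) μ = Measure.map (fun ω i => Z i ω) μ)
    (hsym : ∀ (D : Finset (Fin N)) (π : Equiv.Perm (Fin N)),
      μ {ω | sel (fun i => Z i ω) = D} ≠ 0 → (∀ i, i ∉ D → π i = i) →
      ∀ x : Fin N → E, sel x = D → sel (fun i => x (π i)) = sel x)
    (D : Finset (Fin N)) (hD : μ {ω | sel (fun i => Z i ω) = D} ≠ 0)
    (π : Equiv.Perm (Fin N)) (hπ : ∀ i, i ∉ D → π i = i)
    (A : Set ({ i // i ∈ D } → E)) (hA : MeasurableSet A) :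
    μ[|{ω | sel (fun i => Z i ω) = D}] {ω | (fun i : { i // i ∈ D } => Z i.1 ω) ∈ A} =
      μ[|{ω | sel (fun i => Z i ω) = D}]
        {ω | (fun i : { i // i ∈ D } => Z (π i.1) ω) ∈ A} :=
  selected_conditionally_exchangeable_general μ Z hZ sel hselmeas hexch hsym D hD π hπ A hA
end

section
/- Let Z_{-n}, ..., Z_t be exchangeable, let Ĩ_t be a symmetric selection map as in the symmetry condition (S), and suppose index t ∈ Ĩ_t iff S_t = 1 (the test point is selected). Let R_i = R(Z_i) be non-conformity scores for a fixed measurable score function R. Define, on the event t ∈ D̃_t, the p-value p = (∑_{j ∈ D̃_t} 1{R_j ≥ R_t}) / |D̃_t|. Then P(p ≤ α | S_t = 1) ≤ α for every α ∈ [0,1], provided P(S_t = 1) > 0. -/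
/-!
Fix a possible selected set `D ∋ t`. The transposition of `t` and any `j ∈ D` is supported in
`D`, so by (S) it preserves the event `{sel = D}`, and by exchangeability it preserves the law of
the data; hence `P(sel = D, p_t ≤ α) = P(sel = D, p_j ≤ α)` for every `j ∈ D`. Averaging over
`j ∈ D` bounds this by `α P(sel = D)`, because at most `α |D|` indices of `D` can have p-value
`≤ α`: all of them have score at least the smallest such score, whose rank is `≤ α |D|`.
Summing over `D ∋ t` gives `P(t ∈ sel, p_t ≤ α) ≤ α P(t ∈ sel)`.
-/

open MeasureTheory ProbabilityTheory
open scoped ENNReal Finset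

noncomputable def conformalPValue {ι : Type*} (D : Finset ι) (r : ι → ℝ) (j : ι) : ℝ :=
  #(D.filter fun k => r j ≤ r k) / #D

section
variable {ι : Type*}

-- Stated in `ℝ≥0∞` so that no sign condition on `α` is needed.
theorem card_filter_conformalPValue_le (D : Finset ι) (r : ι → ℝ) (α : ℝ) :
    (#(D.filter fun j => conformalPValue D r j ≤ α) : ℝ≥0∞) ≤ ENNReal.ofReal α * #D := by
  set T := D.filter fun j => conformalPValue D r j ≤ α
  rcases T.eq_empty_or_nonempty with hT | hT
  · simp [hT]
  obtain ⟨j₀, hj₀, hmin⟩ := T.exists_min_image r hT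
  have hj₀D : j₀ ∈ D := (Finset.mem_filter.1 hj₀).1
  have hsub : T ⊆ D.filter fun k => r j₀ ≤ r k := fun k hk =>
    Finset.mem_filter.2 ⟨(Finset.mem_filter.1 hk).1, hmin k hk⟩
  have hrank : (#(D.filter fun k => r j₀ ≤ r k) : ℝ) ≤ α * #D :=
    (div_le_iff₀ (by exact_mod_cast Finset.card_pos.2 ⟨j₀, hj₀D⟩)).1 (Finset.mem_filter.1 hj₀).2
  calc (#T : ℝ≥0∞) ≤ #(D.filter fun k => r j₀ ≤ r k) := by
        exact_mod_cast Finset.card_le_card hsub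
    _ = ENNReal.ofReal #(D.filter fun k => r j₀ ≤ r k) := (ENNReal.ofReal_natCast _).symm
    _ ≤ ENNReal.ofReal (α * #D) := ENNReal.ofReal_le_ofReal hrank
    _ = ENNReal.ofReal α * #D := by
        rw [ENNReal.ofReal_mul' (Nat.cast_nonneg _), ENNReal.ofReal_natCast]

theorem conformalPValue_comp_perm {D : Finset ι} {π : Equiv.Perm ι} (hπ : {a | π a ≠ a} ⊆ D)
    (r : ι → ℝ) (j : ι) :
    conformalPValue D (fun k => r (π k)) j = conformalPValue D r (π j) := by
  classical
  unfold conformalPValue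
  congr 2
  conv_rhs => rw [← Finset.map_perm hπ, Finset.filter_map, Finset.card_map]
  rfl

def IsSymmetricSelection {E : Type*} (sel : (ι → E) → Finset ι) : Prop :=
  ∀ (x : ι → E) (π : Equiv.Perm ι), (∀ i, i ∉ sel x → π i = i) → sel (fun i => x (π i)) = sel x

theorem IsSymmetricSelection.comp_perm_eq_iff {E : Type*} {sel : (ι → E) → Finset ι}
    (hsel : IsSymmetricSelection sel) {D : Finset ι} {π : Equiv.Perm ι} (hπ : {a | π a ≠ a} ⊆ D)
    (x : ι → E) : sel (fun i => x (π i)) = D ↔ sel x = D := by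
  have hfix : ∀ i ∉ D, π i = i := fun i hi => not_not.1 fun h => hi (hπ h)
  constructor
  · intro h
    have := hsel (fun i => x (π i)) π⁻¹ fun i hi => by
      rw [Equiv.Perm.inv_eq_iff_eq, hfix i (h ▸ hi)]
    simpa [h] using this
  · intro h
    rw [hsel x π fun i hi => hfix i (h ▸ hi), h]

open Classical in
theorem sum_measure_le_of_card_filter_le {α : Type*} [MeasurableSpace α] (μ : Measure α)
    (s : Finset ι) {C : ι → Set α} (hC : ∀ i ∈ s, MeasurableSet (C i)) {c : ℝ≥0∞}
    (h : ∀ x, (#(s.filter (x ∈ C ·)) : ℝ≥0∞) ≤ c) : ∑ i ∈ s, μ (C i) ≤ c * μ Set.univ := by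
  calc ∑ i ∈ s, μ (C i) = ∑ i ∈ s, ∫⁻ x, (C i).indicator 1 x ∂μ :=
        Finset.sum_congr rfl fun i hi => (lintegral_indicator_one (hC i hi)).symm
    _ = ∫⁻ x, ∑ i ∈ s, (C i).indicator 1 x ∂μ :=
        (lintegral_finsetSum _ fun i hi => measurable_one.indicator (hC i hi)).symm
    _ = ∫⁻ x, (#(s.filter (x ∈ C ·)) : ℝ≥0∞) ∂μ := by
        simp only [Set.indicator_apply, Pi.one_apply, Finset.sum_boole]
    _ ≤ ∫⁻ _, c ∂μ := lintegral_mono h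
    _ = c * μ Set.univ := lintegral_const c

variable {E : Type*} [MeasurableSpace E]

theorem measurableSet_conformalPValue_le {R : E → ℝ} (hR : Measurable R) (D : Finset ι) (j : ι)
    (α : ℝ) : MeasurableSet {x : ι → E | conformalPValue D (fun k => R (x k)) j ≤ α} := by
  simp only [conformalPValue, Finset.card_filter, Nat.cast_sum, Nat.cast_ite, Nat.cast_one,
    Nat.cast_zero]
  refine measurableSet_le (Measurable.div_const (Finset.measurable_sum _ fun k _ => ?_) _)
    measurable_const
  exact Measurable.ite (measurableSet_le (by fun_prop) (by fun_prop)) measurable_const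
    measurable_const

def IsExchangeable (ν : Measure (ι → E)) : Prop :=
  ∀ σ : Equiv.Perm ι, ν.map (fun x i => x (σ i)) = ν

theorem IsExchangeable.measure_comp_perm_preimage {ν : Measure (ι → E)}
    (hν : IsExchangeable ν) (σ : Equiv.Perm ι)
    {S : Set (ι → E)} (hS : MeasurableSet S) : ν ((fun x i => x (σ i)) ⁻¹' S) = ν S := by
  rw [← Measure.map_apply (by fun_prop) hS, hν]

theorem measurableSet_mem_of_measurableSet_eq [Countable ι] {sel : (ι → E) → Finset ι}
    (hselmeas : ∀ D, MeasurableSet {x | sel x = D}) (t : ι) : MeasurableSet {x | t ∈ sel x} := by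
  have h : {x | t ∈ sel x} = ⋃ D ∈ {D : Finset ι | t ∈ D}, {x | sel x = D} := by ext; simp
  rw [h]
  exact MeasurableSet.biUnion (Set.to_countable _) fun D _ => hselmeas D

variable [DecidableEq ι] {ν : Measure (ι → E)} {sel : (ι → E) → Finset ι} {R : E → ℝ}

theorem measure_fiber_conformalPValue_le_eq
    (hν : IsExchangeable ν) (hsel : IsSymmetricSelection sel)
    (hselmeas : ∀ D, MeasurableSet {x | sel x = D}) (hR : Measurable R) {D : Finset ι} {t j : ι}
    (ht : t ∈ D) (hj : j ∈ D) (α : ℝ) :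
    ν {x | sel x = D ∧ conformalPValue D (fun k => R (x k)) j ≤ α} =
      ν {x | sel x = D ∧ conformalPValue D (fun k => R (x k)) t ≤ α} := by
  have hπ : {a | Equiv.swap t j a ≠ a} ⊆ D := fun a ha => by
    rcases (Equiv.swap_apply_ne_self_iff.1 ha).2 with rfl | rfl <;> assumption
  have hpre : (fun x i => x (Equiv.swap t j i)) ⁻¹'
      {x | sel x = D ∧ conformalPValue D (fun k => R (x k)) t ≤ α} =
      {x | sel x = D ∧ conformalPValue D (fun k => R (x k)) j ≤ α} := by
    ext x
    simp only [Set.mem_preimage, Set.mem_ofPred_eq, hsel.comp_perm_eq_iff hπ,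
      conformalPValue_comp_perm hπ (fun k => R (x k)), Equiv.swap_apply_left]
  rw [← hpre]
  exact hν.measure_comp_perm_preimage _
    ((hselmeas D).inter (measurableSet_conformalPValue_le hR D t α))

theorem measure_fiber_conformalPValue_le_le
    (hν : IsExchangeable ν) (hsel : IsSymmetricSelection sel)
    (hselmeas : ∀ D, MeasurableSet {x | sel x = D}) (hR : Measurable R) {D : Finset ι} {t : ι}
    (ht : t ∈ D) (α : ℝ) :
    ν {x | sel x = D ∧ conformalPValue D (fun k => R (x k)) t ≤ α} ≤
      ENNReal.ofReal α * ν {x | sel x = D} := by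
  have hD : (#D : ℝ≥0∞) ≠ 0 := by exact_mod_cast (Finset.card_pos.2 ⟨t, ht⟩).ne'
  refine (ENNReal.mul_le_mul_iff_right hD (ENNReal.natCast_ne_top _)).1 ?_
  calc #D * ν {x | sel x = D ∧ conformalPValue D (fun k => R (x k)) t ≤ α}
      = ∑ j ∈ D, ν {x | sel x = D ∧ conformalPValue D (fun k => R (x k)) j ≤ α} := by
        rw [Finset.sum_congr rfl fun j hj =>
          measure_fiber_conformalPValue_le_eq hν hsel hselmeas hR ht hj α,
          Finset.sum_const, nsmul_eq_mul]
    _ = ∑ j ∈ D, (ν.restrict {x | sel x = D})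
          {x | conformalPValue D (fun k => R (x k)) j ≤ α} := by
        refine Finset.sum_congr rfl fun j _ => ?_
        rw [Measure.restrict_apply (measurableSet_conformalPValue_le hR D j α), Set.inter_comm]
        rfl
    _ ≤ ENNReal.ofReal α * #D * (ν.restrict {x | sel x = D}) Set.univ :=
        sum_measure_le_of_card_filter_le _ D (fun j _ => measurableSet_conformalPValue_le hR D j α)
          fun x => by convert card_filter_conformalPValue_le D (fun k => R (x k)) α using 4; rfl
    _ = #D * (ENNReal.ofReal α * ν {x | sel x = D}) := by
        rw [Measure.restrict_apply_univ]
        ring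

theorem measure_conformalPValue_le_le [Fintype ι]
    (hν : IsExchangeable ν) (hsel : IsSymmetricSelection sel)
    (hselmeas : ∀ D, MeasurableSet {x | sel x = D}) (hR : Measurable R) (t : ι) (α : ℝ) :
    ν {x | t ∈ sel x ∧ conformalPValue (sel x) (fun k => R (x k)) t ≤ α} ≤
      ENNReal.ofReal α * ν {x | t ∈ sel x} := by
  set P := {x | conformalPValue (sel x) (fun k => R (x k)) t ≤ α}
  set 𝒟 : Finset (Finset ι) := Finset.univ.filter (t ∈ ·)
  have hfib : ∀ D, MeasurableSet (sel ⁻¹' {D}) := hselmeas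
  have hA : {x | t ∈ sel x} = sel ⁻¹' 𝒟 := by ext; simp [𝒟]
  calc ν {x | t ∈ sel x ∧ conformalPValue (sel x) (fun k => R (x k)) t ≤ α}
      = ν.restrict P (sel ⁻¹' 𝒟) := by
        rw [Measure.restrict_apply (hA ▸ measurableSet_mem_of_measurableSet_eq hselmeas t), ← hA]
        rfl
    _ = ∑ D ∈ 𝒟, ν.restrict P (sel ⁻¹' {D}) :=
        (sum_measure_preimage_singleton 𝒟 fun D _ => hfib D).symm
    _ = ∑ D ∈ 𝒟, ν {x | sel x = D ∧ conformalPValue D (fun k => R (x k)) t ≤ α} := by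
        refine Finset.sum_congr rfl fun D _ => ?_
        rw [Measure.restrict_apply (hfib D)]
        congr 1
        ext x
        exact and_congr_right fun (h : sel x = D) => by simp only [P, Set.mem_ofPred_eq, h]
    _ ≤ ∑ D ∈ 𝒟, ENNReal.ofReal α * ν (sel ⁻¹' {D}) := Finset.sum_le_sum fun D hD =>
        measure_fiber_conformalPValue_le_le hν hsel hselmeas hR (Finset.mem_filter.1 hD).2 α
    _ = ENNReal.ofReal α * ν {x | t ∈ sel x} := by
        rw [← Finset.mul_sum, sum_measure_preimage_singleton 𝒟 fun D _ => hfib D, hA]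

end

theorem selective_conformal_p_value_valid_general
    {Ω E : Type*} [MeasurableSpace Ω] [MeasurableSpace E]
    (μ : Measure Ω) {N : ℕ}
    (Z : Fin N → Ω → E) (hZ : ∀ i, Measurable (Z i))
    (sel : (Fin N → E) → Finset (Fin N))
    (hselmeas : ∀ D : Finset (Fin N), MeasurableSet {x : Fin N → E | sel x = D})
    (hexch : ∀ σ : Equiv.Perm (Fin N),
      Measure.map (fun ω i => Z (σ i) ω) μ = Measure.map (fun ω i => Z i ω) μ)
    (hsym : ∀ (x : Fin N → E) (π : Equiv.Perm (Fin N)),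
      (∀ i, i ∉ sel x → π i = i) → sel (fun i => x (π i)) = sel x)
    (t : Fin N) (R : E → ℝ) (hR : Measurable R)
    (α : ℝ) :
    μ[|{ω | t ∈ sel (fun i => Z i ω)}]
      {ω | (((sel (fun i => Z i ω)).filter
          (fun j => R (Z t ω) ≤ R (Z j ω))).card : ℝ) /
        ((sel (fun i => Z i ω)).card : ℝ) ≤ α} ≤ ENNReal.ofReal α := by
  set X : Ω → Fin N → E := fun ω i => Z i ω
  have hX : Measurable X := measurable_pi_lambda _ hZ
  have hν : IsExchangeable (μ.map X) := fun σ => by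
    rw [Measure.map_map (by fun_prop) hX]
    exact hexch σ
  have hA := measurableSet_mem_of_measurableSet_eq hselmeas t
  have hXA : MeasurableSet {ω | t ∈ sel (fun i => Z i ω)} := hX hA
  rw [cond_apply hXA]
  calc (μ (X ⁻¹' {x | t ∈ sel x}))⁻¹ *
        μ (X ⁻¹' {x | t ∈ sel x ∧ conformalPValue (sel x) (fun k => R (x k)) t ≤ α})
      ≤ (μ.map X {x | t ∈ sel x})⁻¹ *
          μ.map X {x | t ∈ sel x ∧ conformalPValue (sel x) (fun k => R (x k)) t ≤ α} := by
        rw [Measure.map_apply hX hA]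
        gcongr
        exact Measure.le_map_apply hX.aemeasurable _
    _ ≤ (μ.map X {x | t ∈ sel x})⁻¹ * (ENNReal.ofReal α * μ.map X {x | t ∈ sel x}) := by
        gcongr
        exact measure_conformalPValue_le_le hν hsym hselmeas hR t α
    _ ≤ ENNReal.ofReal α := by
        rw [mul_left_comm]
        exact mul_le_of_le_one_right' (ENNReal.inv_mul_le_one _)

/-- **Validity of the selective conformal p-value.** Let `Z₁,…,Z_N` be exchangeable,
let `sel` be a symmetric selection map (condition (S)), and let `t` be the test index,
which is selected on the event `{t ∈ sel(Z)}` (i.e. `S_t = 1`).  With nonconformity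
scores `R_i = R(Z_i)` and conformal p-value
`p = #{j ∈ D̃ : R_j ≥ R_t} / |D̃|` on the selection event, we have
`P(p ≤ α ∣ S_t = 1) ≤ α` for every `α ∈ [0,1]`. -/
theorem selective_conformal_p_value_valid
    {Ω E : Type*} [MeasurableSpace Ω] [MeasurableSpace E]
    (μ : Measure Ω) [IsProbabilityMeasure μ] {N : ℕ}
    (Z : Fin N → Ω → E) (hZ : ∀ i, Measurable (Z i))
    (sel : (Fin N → E) → Finset (Fin N))
    (hselmeas : ∀ D : Finset (Fin N), MeasurableSet {x : Fin N → E | sel x = D})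
    (hexch : ∀ σ : Equiv.Perm (Fin N),
      Measure.map (fun ω i => Z (σ i) ω) μ = Measure.map (fun ω i => Z i ω) μ)
    (hsym : ∀ (x : Fin N → E) (π : Equiv.Perm (Fin N)),
      (∀ i, i ∉ sel x → π i = i) → sel (fun i => x (π i)) = sel x)
    (t : Fin N) (R : E → ℝ) (hR : Measurable R)
    (hpos : μ {ω | t ∈ sel (fun i => Z i ω)} ≠ 0)
    (α : ℝ) (hα : α ∈ Set.Icc (0 : ℝ) 1) :
    μ[|{ω | t ∈ sel (fun i => Z i ω)}]
      {ω | (((sel (fun i => Z i ω)).filter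
          (fun j => R (Z t ω) ≤ R (Z j ω))).card : ℝ) /
        ((sel (fun i => Z i ω)).card : ℝ) ≤ α} ≤ ENNReal.ofReal α :=
  selective_conformal_p_value_valid_general μ Z hZ sel hselmeas hexch hsym t R hR α
end

section
/- Suppose for each t ∈ {0,...,T} and each binary sequence (s_0,...,s_{t-1}) with P(S_0=s_0,...,S_{t-1}=s_{t-1},S_t=1) > 0, the strong selection-conditional coverage holds: P(Y_t ∈ Ĉ_t(X_t) | S_0=s_0,...,S_{t-1}=s_{t-1},S_t=1) ≥ 1−α. Then the positive false coverage rate satisfies pFCR(T) := E[ (∑_{t=0}^T S_t 1{Y_t ∉ Ĉ_t(X_t)}) / (∑_{t=0}^T S_t) | ∑_{t=0}^T S_t > 0 ] ≤ α. -/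
/-!
Split the event that something is selected according to the full selection pattern
`s = (S_0, …, S_T)`. On the pattern `s` the false coverage proportion has the constant
denominator `#{t | s t}`, so it suffices that `P(A_t ∩ {S = s}) ≤ α P(S = s)` whenever `s t`.
Conditionally on the selections up to time `t` the future selections are independent of `A_t`,
so `P(A_t | S = s) = P(A_t | S_{≤t} = s_{≤t})`, and the latter is at most `α` by
selection-conditional coverage.
-/

open MeasureTheory ProbabilityTheory Finset

section Coverage

variable {Ω : Type*} [MeasurableSpace Ω] {μ : Measure Ω}

theorem integral_cond {E : Type*} [NormedAddCommGroup E] [NormedSpace ℝ E] (f : Ω → E)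
    (s : Set Ω) : ∫ ω, f ω ∂μ[|s] = (μ.real s)⁻¹ • ∫ ω in s, f ω ∂μ := by
  rw [ProbabilityTheory.cond, integral_smul_measure, ENNReal.toReal_inv, measureReal_def]

lemma measureReal_inter_le_of_ofReal_le_cond_compl [IsFiniteMeasure μ] {G A : Set Ω} {α : ℝ}
    (hG : MeasurableSet G) (hA : MeasurableSet A)
    (hcov : μ G ≠ 0 → ENNReal.ofReal (1 - α) ≤ μ[Aᶜ|G]) :
    μ.real (G ∩ A) ≤ α * μ.real G := by
  by_cases hG0 : μ G = 0
  · simp [measureReal_def, hG0, measure_inter_null_of_null_left]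
  have := cond_isProbabilityMeasure (μ := μ) hG0
  have hcond : (μ[|G]).real A ≤ α := by
    have := (ENNReal.ofReal_le_iff_le_toReal (measure_ne_top _ _)).1 (hcov hG0)
    rw [← measureReal_def, probReal_compl_eq_one_sub hA] at this
    linarith
  calc μ.real (G ∩ A) = (μ[|G]).real A * μ.real G := by
        simp only [measureReal_def, ← ENNReal.toReal_mul, cond_mul_eq_inter hG]
    _ ≤ α * μ.real G := by gcongr

lemma measureReal_inter_le_of_subset_of_mul_eq [IsFiniteMeasure μ] {A E G : Set Ω} {α : ℝ}
    (hEG : E ⊆ G) (hG : μ.real (A ∩ G) ≤ α * μ.real G)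
    (hind : μ (A ∩ E) * μ G = μ (A ∩ G) * μ E) :
    μ.real (A ∩ E) ≤ α * μ.real E := by
  have hind' : μ.real (A ∩ E) * μ.real G = μ.real (A ∩ G) * μ.real E := by
    simpa only [measureReal_def, ENNReal.toReal_mul] using congrArg ENNReal.toReal hind
  rcases (measureReal_nonneg (μ := μ) (s := G)).eq_or_lt with hG0 | hGpos
  · have hE0 : μ.real E = 0 := le_antisymm (hG0 ▸ measureReal_mono hEG) measureReal_nonneg
    have : μ.real (A ∩ E) = 0 :=
      le_antisymm (hE0 ▸ measureReal_mono Set.inter_subset_right) measureReal_nonneg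
    simp [this, hE0]
  refine le_of_mul_le_mul_right ?_ hGpos
  calc μ.real (A ∩ E) * μ.real G = μ.real (A ∩ G) * μ.real E := hind'
    _ ≤ α * μ.real G * μ.real E := by gcongr
    _ = α * μ.real E * μ.real G := by ring

end Coverage

section Selection

variable {Ω ι : Type*} {S : ι → Ω → Bool}

lemma setOf_forall_le_eq_of_eq_true [LinearOrder ι] {s : ι → Bool} {t : ι} (hst : s t = true) :
    {ω | ∀ j, j ≤ t → S j ω = s j} = {ω | (∀ j, j < t → S j ω = s j) ∧ S t ω = true} := by
  ext ω
  simp only [Set.mem_ofPred_eq, ← hst]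
  exact ⟨fun h => ⟨fun j hj => h j hj.le, h t le_rfl⟩,
    fun ⟨h, ht⟩ j hj => hj.lt_or_eq.elim (h j) (· ▸ ht)⟩

variable [Fintype ι]

noncomputable def falseCoverageProportion (S : ι → Ω → Bool) (A : ι → Set Ω) (ω : Ω) : ℝ :=
  (∑ t, if S t ω then (A t).indicator (fun _ => (1 : ℝ)) ω else 0) /
    ∑ t, if S t ω then (1 : ℝ) else 0

variable {A : ι → Set Ω}

lemma falseCoverageProportion_eqOn_selection_pattern (s : ι → Bool) :
    Set.EqOn (falseCoverageProportion S A)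
      (fun ω => (∑ t ∈ univ.filter (fun t => s t), (A t).indicator 1 ω) /
        #(univ.filter fun t => s t))
      {ω | ∀ j, S j ω = s j} := by
  intro ω hω
  have hω : ∀ j, S j ω = s j := hω
  simp only [falseCoverageProportion, hω, sum_filter, sum_boole]
  rfl

variable [MeasurableSpace Ω] {μ : Measure Ω}

lemma measurableSet_selection_pattern (hS : ∀ t, Measurable (S t)) (s : ι → Bool) :
    MeasurableSet {ω | ∀ j, S j ω = s j} := by
  measurability

lemma integrableOn_falseCoverageProportion_selection_pattern [IsFiniteMeasure μ]
    (hS : ∀ t, Measurable (S t)) (hA : ∀ t, MeasurableSet (A t)) (s : ι → Bool) :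
    IntegrableOn (falseCoverageProportion S A) {ω | ∀ j, S j ω = s j} μ :=
  ((integrable_finsetSum _ fun t _ => (integrable_const 1).indicator (hA t)).div_const
    _).integrableOn.congr_fun (falseCoverageProportion_eqOn_selection_pattern s).symm
    (measurableSet_selection_pattern hS s)

lemma setIntegral_falseCoverageProportion_selection_pattern_le [IsFiniteMeasure μ]
    (hS : ∀ t, Measurable (S t)) (hA : ∀ t, MeasurableSet (A t)) {α : ℝ} {s : ι → Bool}
    (hs : ∃ t, s t = true)
    (h : ∀ t, s t = true →
      μ.real (A t ∩ {ω | ∀ j, S j ω = s j}) ≤ α * μ.real {ω | ∀ j, S j ω = s j}) :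
    ∫ ω in {ω | ∀ j, S j ω = s j}, falseCoverageProportion S A ω ∂μ ≤
      α * μ.real {ω | ∀ j, S j ω = s j} := by
  set F := {ω | ∀ j, S j ω = s j}
  have hcard : (0 : ℝ) < #(univ.filter fun t => s t) := by
    obtain ⟨t, ht⟩ := hs
    exact_mod_cast card_pos.2 ⟨t, by simp [ht]⟩
  rw [setIntegral_congr_fun (measurableSet_selection_pattern hS s)
      (falseCoverageProportion_eqOn_selection_pattern s), integral_div,
    integral_finsetSum _ fun t _ => (integrable_const 1).indicator (hA t), div_le_iff₀ hcard]
  calc ∑ t ∈ univ.filter (fun t => s t), ∫ ω in F, (A t).indicator 1 ω ∂μ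
      = ∑ t ∈ univ.filter (fun t => s t), μ.real (A t ∩ F) := by
        refine sum_congr rfl fun t _ => ?_
        rw [integral_indicator_one (hA t), measureReal_restrict_apply (hA t)]
    _ ≤ ∑ t ∈ univ.filter (fun t => s t), α * μ.real F :=
        sum_le_sum fun t ht => h t (mem_filter.1 ht).2
    _ = α * μ.real F * #(univ.filter fun t => s t) := by
        rw [sum_const, nsmul_eq_mul, mul_comm]

theorem setIntegral_falseCoverageProportion_le [IsFiniteMeasure μ] (hS : ∀ t, Measurable (S t))
    (hA : ∀ t, MeasurableSet (A t)) {α : ℝ}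
    (h : ∀ (s : ι → Bool) t, s t = true →
      μ.real (A t ∩ {ω | ∀ j, S j ω = s j}) ≤ α * μ.real {ω | ∀ j, S j ω = s j}) :
    ∫ ω in {ω | ∃ t, S t ω = true}, falseCoverageProportion S A ω ∂μ ≤
      α * μ.real {ω | ∃ t, S t ω = true} := by
  classical
  let pattern : Ω → ι → Bool := fun ω j => S j ω
  have hfiber (s : ι → Bool) : pattern ⁻¹' {s} = {ω | ∀ j, S j ω = s j} := by
    ext ω; simp [pattern, funext_iff]
  let P := univ.filter fun s : ι → Bool => ∃ t, s t = true
  have hE : {ω | ∃ t, S t ω = true} = ⋃ s ∈ P, pattern ⁻¹' {s} := by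
    ext ω; simp [P, pattern]
  have hmeas (s : ι → Bool) : MeasurableSet (pattern ⁻¹' {s}) :=
    hfiber s ▸ measurableSet_selection_pattern hS s
  have hdisj := Set.pairwiseDisjoint_fiber pattern (P : Set (ι → Bool))
  rw [hE, integral_biUnion_finset P (fun s _ => hmeas s) hdisj
      (fun s _ => hfiber s ▸ integrableOn_falseCoverageProportion_selection_pattern hS hA s),
    measureReal_biUnion_finset hdisj fun s _ => hmeas s, mul_sum]
  refine sum_le_sum fun s hs => ?_
  rw [hfiber s]
  exact setIntegral_falseCoverageProportion_selection_pattern_le hS hA (mem_filter.1 hs).2 (h s)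

end Selection

/-- **pFCR control from strong selection-conditional coverage.** `S t` are the
selection indicators, `A t = {Y_t ∉ Ĉ_t(X_t)}` the miscoverage events.  Assuming
strong selection-conditional coverage (coverage at least `1 - α` conditional on any
past selection pattern together with `S_t = 1`) and that, conditional on the
selections up to time `t`, the future selections are independent of the coverage
event at time `t`, the positive false coverage rate is at most `α`. -/
theorem pFCR_le_of_strong_selection_conditional_coverage
    {Ω : Type*} [MeasurableSpace Ω] (μ : Measure Ω) [IsProbabilityMeasure μ]
    (T : ℕ) (S : Fin (T + 1) → Ω → Bool) (hS : ∀ t, Measurable (S t))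
    (A : Fin (T + 1) → Set Ω) (hA : ∀ t, MeasurableSet (A t)) (α : ℝ)
    (hcov : ∀ (t : Fin (T + 1)) (s : Fin (T + 1) → Bool),
      μ {ω | (∀ j, j < t → S j ω = s j) ∧ S t ω = true} ≠ 0 →
      ENNReal.ofReal (1 - α) ≤
        μ[|{ω | (∀ j, j < t → S j ω = s j) ∧ S t ω = true}] (A t)ᶜ)
    (hind : ∀ (t : Fin (T + 1)) (s : Fin (T + 1) → Bool),
      μ (A t ∩ {ω | ∀ j, S j ω = s j}) * μ {ω | ∀ j, j ≤ t → S j ω = s j} =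
        μ (A t ∩ {ω | ∀ j, j ≤ t → S j ω = s j}) * μ {ω | ∀ j, S j ω = s j})
    (hpos : μ {ω | ∃ t, S t ω = true} ≠ 0) :
    ∫ ω, (∑ t, if S t ω then (A t).indicator (fun _ => (1 : ℝ)) ω else 0) /
        (∑ t, if S t ω then (1 : ℝ) else 0)
      ∂(μ[|{ω | ∃ t, S t ω = true}]) ≤ α := by
  have hpattern (s : Fin (T + 1) → Bool) (t : Fin (T + 1)) (hst : s t = true) :
      μ.real (A t ∩ {ω | ∀ j, S j ω = s j}) ≤ α * μ.real {ω | ∀ j, S j ω = s j} := by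
    have hpast := setOf_forall_le_eq_of_eq_true (S := S) hst
    have hsub : {ω | ∀ j, S j ω = s j} ⊆ {ω | (∀ j, j < t → S j ω = s j) ∧ S t ω = true} :=
      fun ω hω => ⟨fun j _ => hω j, hω t ▸ hst⟩
    refine measureReal_inter_le_of_subset_of_mul_eq hsub ?_ (hpast ▸ hind t s)
    rw [Set.inter_comm]
    exact measureReal_inter_le_of_ofReal_le_cond_compl (by measurability) (hA t) (hcov t s)
  have hE : 0 < μ.real {ω | ∃ t, S t ω = true} := measureReal_nonneg.lt_of_ne ((measureReal_ne_zero_iff).2 hpos).symm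
  rw [integral_cond, smul_eq_mul, inv_mul_le_iff₀ hE, mul_comm]
  exact setIntegral_falseCoverageProportion_le hS hA hpattern
end

section
/- Suppose strong selection-conditional coverage holds exactly with equality, i.e., P(Y_t ∈ Ĉ_t(X_t) | S_0=s_0,...,S_{t-1}=s_{t-1},S_t=1) = 1−α for all t ≤ T and all realizable patterns, and suppose P(∑_{t=0}^T S_t > 0) = 1. Then FCR(T) = E[(∑_{t=0}^T S_t 1{Y_t ∉ Ĉ_t(X_t)})/(max(1,∑_{t=0}^T S_t))] = α. -/
/-!
Partition `Ω` by the full selection pattern `S = s`. If `s t = true`, exact coverage given the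
prefix `(s_0, …, s_t)` says that the miscoverage event `A t` has conditional probability `α`
given that prefix, and the conditional independence of the later selections transfers this to
the full pattern: `P(A t ∩ {S = s}) = α P(S = s)`. The false coverage proportion is
`∑ t, 1_{A t} w_t(S)` with weights `w_t(s) = s_t / max 1 |s|` that depend on the pattern only,
so its expectation is `α E[∑ t, w_t(S)] = α P(S ≠ 0) = α`.
-/

open MeasureTheory ProbabilityTheory ENNReal

section

variable {Ω : Type*} [MeasurableSpace Ω] {μ : Measure Ω}

theorem measure_inter_eq_mul_of_cond_compl [IsFiniteMeasure μ] {A B : Set Ω} {p : ℝ≥0∞}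
    (hA : MeasurableSet A) (hB : MeasurableSet B) (hp : p ≤ 1)
    (hcond : μ B ≠ 0 → μ[Aᶜ | B] = 1 - p) : μ (A ∩ B) = p * μ B := by
  rcases eq_or_ne (μ B) 0 with hB0 | hB0
  · rw [hB0, mul_zero]
    exact measure_mono_null Set.inter_subset_right hB0
  have := cond_isProbabilityMeasure (μ := μ) hB0
  have hcondA : μ[A | B] = p := by
    rw [← ENNReal.sub_sub_cancel one_ne_top hp, ← hcond hB0, prob_compl_eq_one_sub hA,
      ENNReal.sub_sub_cancel one_ne_top prob_le_one]
  rw [Set.inter_comm, ← cond_mul_eq_inter hB, hcondA]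

theorem measure_inter_eq_mul_of_subset_of_mul_eq [IsFiniteMeasure μ] {A B E : Set Ω}
    {p : ℝ≥0∞} (hEB : E ⊆ B) (hAB : μ (A ∩ B) = p * μ B)
    (hAE : μ (A ∩ E) * μ B = μ (A ∩ B) * μ E) : μ (A ∩ E) = p * μ E := by
  rcases eq_or_ne (μ B) 0 with hB0 | hB0
  · have hE0 := measure_mono_null hEB hB0
    rw [hE0, mul_zero]
    exact measure_mono_null Set.inter_subset_right hE0
  rw [← ENNReal.mul_left_inj hB0 (measure_ne_top μ B), hAE, hAB]
  ring

variable {β : Type*} [Fintype β] [MeasurableSpace β] [MeasurableSingletonClass β]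

theorem integral_comp_eq_sum_measureReal_preimage (ν : Measure Ω) [IsFiniteMeasure ν]
    {X : Ω → β} (hX : Measurable X) (g : β → ℝ) :
    ∫ ω, g (X ω) ∂ν = ∑ b, ν.real (X ⁻¹' {b}) * g b := by
  rw [← integral_map hX.aemeasurable Measurable.of_discrete.aestronglyMeasurable,
    integral_fintype .of_finite]
  simp [measureReal_def, Measure.map_apply hX (measurableSet_singleton _)]

theorem setIntegral_comp_eq_mul_integral [IsFiniteMeasure μ] {X : Ω → β} (hX : Measurable X)
    (g : β → ℝ) {A : Set Ω} {α : ℝ}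
    (h : ∀ b, g b ≠ 0 → μ.real (A ∩ X ⁻¹' {b}) = α * μ.real (X ⁻¹' {b})) :
    ∫ ω in A, g (X ω) ∂μ = α * ∫ ω, g (X ω) ∂μ := by
  rw [integral_comp_eq_sum_measureReal_preimage _ hX,
    integral_comp_eq_sum_measureReal_preimage _ hX, Finset.mul_sum]
  refine Finset.sum_congr rfl fun b _ => ?_
  rcases eq_or_ne (g b) 0 with hb | hb
  · simp [hb]
  · rw [measureReal_restrict_apply (hX (measurableSet_singleton b)), Set.inter_comm, h b hb,
      mul_assoc]

end

section SelectionWeight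

variable {ι : Type*} [Fintype ι]

noncomputable def selectionWeight (s : ι → Bool) (i : ι) : ℝ :=
  (if s i then 1 else 0) / max 1 (∑ j, if s j then (1 : ℝ) else 0)

theorem eq_true_of_selectionWeight_ne_zero {s : ι → Bool} {i : ι}
    (h : selectionWeight s i ≠ 0) : s i = true := by
  by_contra hi
  simp [selectionWeight, hi] at h

theorem sum_selectionWeight_eq_one {s : ι → Bool} (hs : ∃ i, s i = true) :
    ∑ i, selectionWeight s i = 1 := by
  obtain ⟨i, hi⟩ := hs
  have hcard : (1 : ℝ) ≤ ∑ j, if s j then (1 : ℝ) else 0 := by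
    simpa [hi] using Finset.single_le_sum (f := fun j => if s j then (1 : ℝ) else 0)
      (fun j _ => by positivity) (Finset.mem_univ i)
  simp only [selectionWeight]
  rw [← Finset.sum_div, max_eq_right hcard, div_self (by linarith)]

end SelectionWeight

theorem measure_inter_selection_pattern_eq_mul {Ω : Type*} [MeasurableSpace Ω] {μ : Measure Ω}
    [IsFiniteMeasure μ] {n : ℕ} {S : Fin n → Ω → Bool} (hS : ∀ t, Measurable (S t))
    {A : Set Ω} (hA : MeasurableSet A) {α : ℝ} (hα : α ∈ Set.Icc (0 : ℝ) 1)
    {t : Fin n} {s : Fin n → Bool} (hst : s t = true)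
    (hcov : μ {ω | (∀ j, j < t → S j ω = s j) ∧ S t ω = true} ≠ 0 →
      μ[|{ω | (∀ j, j < t → S j ω = s j) ∧ S t ω = true}] Aᶜ = ENNReal.ofReal (1 - α))
    (hind : μ (A ∩ {ω | ∀ j, S j ω = s j}) * μ {ω | ∀ j, j ≤ t → S j ω = s j} =
      μ (A ∩ {ω | ∀ j, j ≤ t → S j ω = s j}) * μ {ω | ∀ j, S j ω = s j}) :
    μ (A ∩ {ω | ∀ j, S j ω = s j}) = ENNReal.ofReal α * μ {ω | ∀ j, S j ω = s j} := by
  have hprefix : {ω | (∀ j, j < t → S j ω = s j) ∧ S t ω = true} =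
      {ω | ∀ j, j ≤ t → S j ω = s j} := by
    ext ω
    simp only [Set.mem_ofPred_eq, le_iff_lt_or_eq, or_imp, forall_and, forall_eq, hst]
  have hprefix_meas : MeasurableSet {ω | ∀ j, j ≤ t → S j ω = s j} :=
    measurable_pi_lambda _ hS
      (Set.toFinite {s' : Fin n → Bool | ∀ j ≤ t, s' j = s j}).measurableSet
  have hprefix_mul := measure_inter_eq_mul_of_cond_compl hA hprefix_meas
    (ofReal_le_one.2 hα.2) fun h0 => by
      rw [← hprefix] at h0 ⊢
      rw [hcov h0, ENNReal.ofReal_sub _ hα.1, ofReal_one]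
  exact measure_inter_eq_mul_of_subset_of_mul_eq
    (Set.ofPred_subset_ofPred.2 fun ω h j _ => h j) hprefix_mul hind

/-- **Exact FCR under exact strong selection-conditional coverage.** If coverage
conditional on any past selection pattern together with `S_t = 1` is exactly `1 - α`,
future selections are conditionally independent of the coverage event given the
selections up to time `t`, and almost surely at least one selection is made, then
`FCR(T) = α`. -/
theorem FCR_eq_of_exact_strong_selection_conditional_coverage
    {Ω : Type*} [MeasurableSpace Ω] (μ : Measure Ω) [IsProbabilityMeasure μ]
    (T : ℕ) (S : Fin (T + 1) → Ω → Bool) (hS : ∀ t, Measurable (S t))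
    (A : Fin (T + 1) → Set Ω) (hA : ∀ t, MeasurableSet (A t))
    (α : ℝ) (hα : α ∈ Set.Icc (0 : ℝ) 1)
    (hcov : ∀ (t : Fin (T + 1)) (s : Fin (T + 1) → Bool),
      μ {ω | (∀ j, j < t → S j ω = s j) ∧ S t ω = true} ≠ 0 →
      μ[|{ω | (∀ j, j < t → S j ω = s j) ∧ S t ω = true}] (A t)ᶜ =
        ENNReal.ofReal (1 - α))
    (hind : ∀ (t : Fin (T + 1)) (s : Fin (T + 1) → Bool),
      μ (A t ∩ {ω | ∀ j, S j ω = s j}) * μ {ω | ∀ j, j ≤ t → S j ω = s j} =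
        μ (A t ∩ {ω | ∀ j, j ≤ t → S j ω = s j}) * μ {ω | ∀ j, S j ω = s j})
    (hpos : μ {ω | ∃ t, S t ω = true} = 1) :
    ∫ ω, (∑ t, if S t ω then (A t).indicator (fun _ => (1 : ℝ)) ω else 0) /
        max 1 (∑ t, if S t ω then (1 : ℝ) else 0) ∂μ = α := by
  set X : Ω → (Fin (T + 1) → Bool) := fun ω j => S j ω
  have hX : Measurable X := measurable_pi_lambda _ hS
  have hint : ∀ t, Integrable (fun ω => selectionWeight (X ω) t) μ :=
    fun t => Integrable.of_finite.comp_measurable (g := (selectionWeight · t)) hX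
  have hmiscoverage : ∀ t s, selectionWeight s t ≠ 0 →
      μ.real (A t ∩ X ⁻¹' {s}) = α * μ.real (X ⁻¹' {s}) := by
    intro t s hts
    have hpattern : X ⁻¹' {s} = {ω | ∀ j, S j ω = s j} := by
      ext ω
      simp [X, funext_iff]
    rw [hpattern, measureReal_def, measureReal_def, measure_inter_selection_pattern_eq_mul hS
      (hA t) hα (eq_true_of_selectionWeight_ne_zero hts) (hcov t s) (hind t s),
      toReal_mul, toReal_ofReal hα.1]
  have hselected : ∀ᵐ ω ∂μ, ∑ t, selectionWeight (X ω) t = 1 := by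
    filter_upwards [(mem_ae_iff_prob_eq_one (hX (Set.toFinite
      {s : Fin (T + 1) → Bool | ∃ t, s t = true}).measurableSet)).2 hpos] with ω hω
    exact sum_selectionWeight_eq_one hω
  calc _ = ∑ t, ∫ ω in A t, selectionWeight (X ω) t ∂μ := by
        simp_rw [Finset.sum_div, ← integral_indicator (hA _)]
        rw [← integral_finsetSum _ fun t _ => (hint t).indicator (hA t)]
        congr 1 with ω
        refine Finset.sum_congr rfl fun t _ => ?_
        by_cases hAt : ω ∈ A t <;> simp [selectionWeight, X, hAt]
    _ = ∑ t, α * ∫ ω, selectionWeight (X ω) t ∂μ :=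
        Finset.sum_congr rfl fun t _ => setIntegral_comp_eq_mul_integral hX _ (hmiscoverage t)
    _ = α := by
        rw [← Finset.mul_sum, ← integral_finsetSum _ fun t _ => hint t,
          integral_congr_ae hselected]
        simp
end

section
/- Consider the conformal LORD-CI procedure: at each time t, a level α_t ∈ (0,1) measurable with respect to F_{t-1} = σ(S_0,...,S_{t-1}) is chosen, and the miscoverage event M_t = 1{R_t > Q̂_{1−α_t}({R_i}_{i ∈ J_off})} satisfies E[M_t | F^{T∖t}] ≤ α_t where F^{T∖t} = σ(S_0,...,S_{t-1},S_{t+1},...,S_T). Suppose the invariant ∑_{t=0}^T α_t ≤ α · max(1, ∑_{t=0}^T S_t) holds almost surely for all T, the selection rules are monotone in the sense that replacing S_t by 1 can only increase ∑_j S_j, and S_t ∈ {0,1}. Then FCR(T) = E[(∑_{t=0}^T S_t M_t)/(max(1,∑_{t=0}^T S_t))] ≤ α for all T ≥ 0. -/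
/-!
Let `N_t = numSelected (update S t true)` be the number of selections with `S_t` forced to `1`.
It does not depend on `S_t`, so it is `σ(S_j : j ≠ t)`-measurable; it equals `max 1 (∑ S_j)`
when `S_t = 1` and dominates it always. Pulling `1 / N_t` out of the conditional expectation,
`E[S_t M_t / max 1 (∑ S_j)] ≤ E[M_t / N_t] ≤ E[α_t / N_t] ≤ E[α_t / max 1 (∑ S_j)]`,
and after summing over `t` the invariant at the final horizon bounds the right side by `α`.
-/

open MeasureTheory

/-- Miscoverage indicator of conformal LORD-CI at a time point:
`M = 1{R_t > Q̂_{1-α_t}({R_i}_{i ∈ J_off})}`. -/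
noncomputable def miscover {Ω : Type*} (k : ℕ) (Roff : Fin k → Ω → ℝ)
    (Rt : Ω → ℝ) (a : Ω → ℝ) (ω : Ω) : ℝ :=
  if empQuantile k (fun i => Roff i ω) (1 - a ω) < (Rt ω : EReal) then 1 else 0

open Finset Function

lemma empQuantile_lt_coe_iff (m : ℕ) (z : Fin m → ℝ) (b r : ℝ) :
    empQuantile m z b < r ↔ b ≤ (#{i | z i < r} : ℝ) / m := by
  rw [empQuantile, sInf_lt_iff]
  constructor
  · rintro ⟨q, hq, hqr⟩
    refine hq.trans (div_le_div_of_nonneg_right ?_ m.cast_nonneg)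
    refine Nat.cast_le.mpr (card_le_card fun i hi => ?_)
    simp only [mem_filter, mem_univ, true_and] at hi ⊢
    exact_mod_cast hi.trans_lt hqr
  · intro hb
    refine ⟨(univ.filter (z · < r)).sup fun i => (z i : EReal), hb.trans ?_, ?_⟩
    · refine div_le_div_of_nonneg_right (Nat.cast_le.mpr (card_le_card fun i hi => ?_))
        m.cast_nonneg
      simp only [mem_filter, mem_univ, true_and]
      exact Finset.le_sup (f := fun i => (z i : EReal)) hi
    · refine (Finset.sup_lt_iff (EReal.bot_lt_coe r)).mpr fun i hi => ?_
      simp only [mem_filter, mem_univ, true_and] at hi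
      exact_mod_cast hi

section Miscover

variable {Ω : Type*} {k : ℕ} {Roff : Fin k → Ω → ℝ} {Rt a : Ω → ℝ}

lemma miscover_nonneg (ω : Ω) : 0 ≤ miscover k Roff Rt a ω := by
  unfold miscover; split <;> norm_num

lemma miscover_le_one (ω : Ω) : miscover k Roff Rt a ω ≤ 1 := by
  unfold miscover; split <;> norm_num

lemma measurable_miscover [MeasurableSpace Ω] (hRoff : ∀ i, Measurable (Roff i))
    (hRt : Measurable Rt) (ha : Measurable a) : Measurable (miscover k Roff Rt a) := by
  have hcount : Measurable fun ω => (#{i | Roff i ω < Rt ω} : ℝ) := by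
    simp only [card_filter, Nat.cast_sum, Nat.cast_ite, Nat.cast_one, Nat.cast_zero]
    exact Finset.measurable_sum _ fun i _ =>
      Measurable.ite (measurableSet_lt (hRoff i) hRt) measurable_const measurable_const
  unfold miscover
  simp only [empQuantile_lt_coe_iff]
  exact Measurable.ite (measurableSet_le (measurable_const.sub ha) (hcount.div_const _))
    measurable_const measurable_const

lemma integrable_miscover [MeasurableSpace Ω] {μ : Measure Ω} [IsFiniteMeasure μ]
    (hRoff : ∀ i, Measurable (Roff i)) (hRt : Measurable Rt) (ha : Measurable a) :
    Integrable (miscover k Roff Rt a) μ :=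
  .of_bound (measurable_miscover hRoff hRt ha).aestronglyMeasurable 1 <| ae_of_all _ fun ω => by
    rw [Real.norm_of_nonneg (miscover_nonneg ω)]
    exact miscover_le_one ω

end Miscover

section Selection

variable {ι : Type*} [Fintype ι]

def numSelected (s : ι → Bool) : ℝ := ∑ j, if s j then 1 else 0

variable [DecidableEq ι] {s : ι → Bool} {t : ι}

lemma numSelected_le_update_true : numSelected s ≤ numSelected (update s t true) :=
  sum_le_sum fun j _ => by
    by_cases h : j = t
    · subst h; split <;> simp
    · simp [update_of_ne h]

lemma one_le_numSelected_update_true : 1 ≤ numSelected (update s t true) := by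
  refine le_trans ?_ (single_le_sum (fun j _ => ?_) (mem_univ t))
  · simp
  · split <;> norm_num

lemma max_one_numSelected_le : max 1 (numSelected s) ≤ numSelected (update s t true) :=
  max_le one_le_numSelected_update_true numSelected_le_update_true

lemma max_one_numSelected_eq (h : s t = true) :
    max 1 (numSelected s) = numSelected (update s t true) := by
  have hs : update s t true = s := update_eq_self_iff.mpr h.symm
  rw [hs]
  exact max_eq_right (hs ▸ one_le_numSelected_update_true)

lemma ite_div_max_one_numSelected_le {x : ℝ} (hx : 0 ≤ x) :
    (if s t then x else 0) / max 1 (numSelected s) ≤ (numSelected (update s t true))⁻¹ * x := by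
  cases h : s t
  · simpa using mul_nonneg (inv_nonneg.mpr (zero_le_one.trans one_le_numSelected_update_true)) hx
  · rw [if_pos rfl, max_one_numSelected_eq h, div_eq_inv_mul]

lemma inv_numSelected_update_mul_le {x : ℝ} (hx : 0 ≤ x) :
    (numSelected (update s t true))⁻¹ * x ≤ x / max 1 (numSelected s) := by
  rw [← div_eq_inv_mul]
  exact div_le_div_of_nonneg_left hx (zero_lt_one.trans_le (le_max_left _ _))
    max_one_numSelected_le

end Selection

lemma measurable_comap_ne_of_update_eq {Ω ι β : Type*} [Finite ι] [DecidableEq ι]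
    [MeasurableSpace β] (S : ι → Ω → Bool) (t : ι) {F : (ι → Bool) → β}
    (hF : ∀ s b, F (update s t b) = F s) :
    Measurable[MeasurableSpace.comap (fun ω (j : {j // j ≠ t}) => S j ω) MeasurableSpace.pi]
      fun ω => F fun j => S j ω := by
  have hG : Measurable fun v : {j // j ≠ t} → Bool =>
      F fun j => if h : j = t then false else v ⟨j, h⟩ :=
    measurable_of_countable _
  convert hG.comp (comap_measurable _) using 1
  funext ω
  rw [comp_apply, ← hF _ false]
  congr 1
  funext j
  by_cases h : j = t <;> simp [h]

lemma integral_mul_le_of_condExp_le {Ω : Type*} {m m0 : MeasurableSpace Ω} {μ : Measure Ω}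
    [IsFiniteMeasure μ] (hm : m ≤ m0) {f g a : Ω → ℝ} {C : ℝ} (hg : StronglyMeasurable[m] g)
    (hg0 : ∀ ω, 0 ≤ g ω) (hgC : ∀ ω, g ω ≤ C) (hf : Integrable f μ)
    (hga : Integrable (fun ω => g ω * a ω) μ) (hfa : μ[f | m] ≤ᵐ[μ] a) :
    ∫ ω, g ω * f ω ∂μ ≤ ∫ ω, g ω * a ω ∂μ := by
  have hg_bdd : ∀ᵐ ω ∂μ, ‖g ω‖ ≤ C :=
    ae_of_all _ fun ω => (Real.norm_of_nonneg (hg0 ω)).trans_le (hgC ω)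
  have hgf : Integrable (g * f) μ := hf.bdd_mul (hg.mono hm).aestronglyMeasurable hg_bdd
  calc ∫ ω, g ω * f ω ∂μ = ∫ ω, (μ[g * f | m]) ω ∂μ := (integral_condExp hm).symm
    _ = ∫ ω, g ω * (μ[f | m]) ω ∂μ :=
      integral_congr_ae (condExp_mul_of_stronglyMeasurable_left hg hgf hf)
    _ ≤ ∫ ω, g ω * a ω ∂μ :=
      integral_mono_ae (integrable_condExp.bdd_mul (hg.mono hm).aestronglyMeasurable hg_bdd) hga
        (hfa.mono fun ω h => mul_le_mul_of_nonneg_left h (hg0 ω))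

lemma MeasureTheory.Integrable.div_of_one_le {Ω : Type*} [MeasurableSpace Ω] {μ : Measure Ω}
    {f w : Ω → ℝ} (hf : Integrable f μ) (hw : Measurable w) (hw1 : ∀ ω, 1 ≤ w ω) :
    Integrable (fun ω => f ω / w ω) μ := by
  refine hf.mul_bdd hw.inv.aestronglyMeasurable (c := 1) (ae_of_all _ fun ω => ?_)
  rw [norm_inv, Real.norm_of_nonneg (zero_le_one.trans (hw1 ω))]
  exact inv_le_one_of_one_le₀ (hw1 ω)

lemma MeasureTheory.Integrable.ite_zero_of_measurable {Ω : Type*} [MeasurableSpace Ω]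
    {μ : Measure Ω} {f : Ω → ℝ} {p : Ω → Bool} (hf : Integrable f μ) (hp : Measurable p) :
    Integrable (fun ω => if p ω then f ω else 0) μ := by
  have hind : (fun ω => if p ω then f ω else 0) = (p ⁻¹' {true}).indicator f := by
    funext ω
    by_cases h : p ω <;> simp [h]
  exact hind ▸ hf.indicator (hp (measurableSet_singleton true))

lemma measurable_max_one_numSelected {Ω ι : Type*} [Fintype ι] [MeasurableSpace Ω]
    {S : ι → Ω → Bool} (hS : ∀ j, Measurable (S j)) :
    Measurable fun ω => max 1 (numSelected fun j => S j ω) :=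
  (measurable_of_countable fun s : ι → Bool => max 1 (numSelected s)).comp
    (measurable_pi_lambda _ hS)

theorem integral_selected_div_le {Ω ι : Type*} [Fintype ι] [DecidableEq ι]
    [m0 : MeasurableSpace Ω] {μ : Measure Ω} [IsFiniteMeasure μ] {S : ι → Ω → Bool}
    (hS : ∀ j, Measurable (S j)) {t : ι} {M a : Ω → ℝ} (hM : Integrable M μ)
    (hM0 : ∀ ω, 0 ≤ M ω) (ha : Integrable a μ) (ha0 : ∀ ω, 0 ≤ a ω)
    (hMa : μ[M | MeasurableSpace.comap (fun ω (j : {j // j ≠ t}) => S j ω)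
      MeasurableSpace.pi] ≤ᵐ[μ] a) :
    ∫ ω, (if S t ω then M ω else 0) / max 1 (numSelected fun j => S j ω) ∂μ ≤
      ∫ ω, a ω / max 1 (numSelected fun j => S j ω) ∂μ := by
  have hcomap : MeasurableSpace.comap (fun ω (j : {j // j ≠ t}) => S j ω) MeasurableSpace.pi
      ≤ m0 :=
    (measurable_pi_lambda (fun ω (j : {j // j ≠ t}) => S j ω) fun j => hS j).comap_le
  have hD := measurable_max_one_numSelected hS
  set g := fun ω => (numSelected (update (fun j => S j ω) t true))⁻¹
  have hg : StronglyMeasurable[MeasurableSpace.comap (fun ω (j : {j // j ≠ t}) => S j ω)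
      MeasurableSpace.pi] g :=
    (measurable_comap_ne_of_update_eq S t (F := fun s => (numSelected (update s t true))⁻¹)
      fun s b => by rw [update_idem]).stronglyMeasurable
  have hg0 : ∀ ω, 0 ≤ g ω := fun ω => inv_nonneg.mpr
    (zero_le_one.trans one_le_numSelected_update_true)
  have hg1 : ∀ ω, g ω ≤ 1 := fun ω => inv_le_one_of_one_le₀ one_le_numSelected_update_true
  have hg_bdd : ∀ᵐ ω ∂μ, ‖g ω‖ ≤ 1 :=
    ae_of_all _ fun ω => (Real.norm_of_nonneg (hg0 ω)).trans_le (hg1 ω)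
  calc ∫ ω, (if S t ω then M ω else 0) / max 1 (numSelected fun j => S j ω) ∂μ
      ≤ ∫ ω, g ω * M ω ∂μ :=
        integral_mono ((hM.ite_zero_of_measurable (hS t)).div_of_one_le hD fun _ => le_max_left _ _)
          (hM.bdd_mul (hg.mono hcomap).aestronglyMeasurable hg_bdd)
          fun ω => ite_div_max_one_numSelected_le (s := fun j => S j ω) (hM0 ω)
    _ ≤ ∫ ω, g ω * a ω ∂μ := integral_mul_le_of_condExp_le hcomap hg hg0 hg1 hM
          (ha.bdd_mul (hg.mono hcomap).aestronglyMeasurable hg_bdd) hMa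
    _ ≤ ∫ ω, a ω / max 1 (numSelected fun j => S j ω) ∂μ :=
        integral_mono (ha.bdd_mul (hg.mono hcomap).aestronglyMeasurable hg_bdd)
          (ha.div_of_one_le hD fun _ => le_max_left _ _)
          fun ω => inv_numSelected_update_mul_le (s := fun j => S j ω) (ha0 ω)

theorem integral_sum_selected_div_le {Ω ι : Type*} [Fintype ι] [DecidableEq ι]
    [MeasurableSpace Ω] {μ : Measure Ω} [IsFiniteMeasure μ] {S : ι → Ω → Bool}
    (hS : ∀ j, Measurable (S j)) {M a : ι → Ω → ℝ} (hM : ∀ t, Integrable (M t) μ)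
    (hM0 : ∀ t ω, 0 ≤ M t ω) (ha : ∀ t, Integrable (a t) μ) (ha0 : ∀ t ω, 0 ≤ a t ω)
    (hMa : ∀ t, μ[M t | MeasurableSpace.comap (fun ω (j : {j // j ≠ t}) => S j ω)
      MeasurableSpace.pi] ≤ᵐ[μ] a t) :
    ∫ ω, (∑ t, if S t ω then M t ω else 0) / max 1 (numSelected fun j => S j ω) ∂μ ≤
      ∫ ω, (∑ t, a t ω) / max 1 (numSelected fun j => S j ω) ∂μ := by
  have hD := measurable_max_one_numSelected hS
  simp only [sum_div]
  rw [integral_finsetSum _ fun t _ =>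
      ((hM t).ite_zero_of_measurable (hS t)).div_of_one_le hD fun _ => le_max_left _ _,
    integral_finsetSum _ fun t _ => (ha t).div_of_one_le hD fun _ => le_max_left _ _]
  exact sum_le_sum fun t _ =>
    integral_selected_div_le hS (hM t) (hM0 t) (ha t) (ha0 t) (hMa t)

/-- **FCR control of conformal LORD-CI.** At each time `t` a level `α_t ∈ (0,1)`,
measurable w.r.t. the past selections `σ(S_0,…,S_{t-1})`, is chosen; the miscoverage
indicator `M_t = 1{R_t > Q̂_{1-α_t}(offline scores)}` satisfies
`E[M_t ∣ F^{T∖t}] ≤ α_t` where `F^{T∖t} = σ(S_j : j ≠ t)`; and the invariant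
`∑_{t≤s} α_t ≤ α · max(1, ∑_{t≤s} S_t)` holds almost surely for every horizon `s`.
Then `FCR(T) ≤ α`. -/
theorem lordCI_FCR_control
    {Ω : Type*} [m0 : MeasurableSpace Ω] (μ : Measure Ω) [IsProbabilityMeasure μ]
    (T k : ℕ) (S : Fin (T + 1) → Ω → Bool) (hS : ∀ t, Measurable (S t))
    (αt : Fin (T + 1) → Ω → ℝ)
    (Roff : Fin k → Ω → ℝ) (R : Fin (T + 1) → Ω → ℝ)
    (hRoff : ∀ i, Measurable (Roff i)) (hR : ∀ t, Measurable (R t))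
    (α : ℝ)
    (hα01 : ∀ t ω, αt t ω ∈ Set.Ioo (0 : ℝ) 1)
    (hαmeas : ∀ t : Fin (T + 1),
      Measurable[MeasurableSpace.comap
        (fun ω => fun j : { j : Fin (T + 1) // j < t } => S j.1 ω)
        MeasurableSpace.pi] (αt t))
    (hM : ∀ t : Fin (T + 1),
      (μ[miscover k Roff (R t) (αt t) |
        MeasurableSpace.comap
          (fun ω => fun j : { j : Fin (T + 1) // j ≠ t } => S j.1 ω)
          MeasurableSpace.pi]) ≤ᵐ[μ] αt t)
    (hinv : ∀ᵐ ω ∂μ, ∀ s : Fin (T + 1),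
      ∑ t ∈ Finset.univ.filter (· ≤ s), αt t ω ≤
        α * max 1 (∑ t ∈ Finset.univ.filter (· ≤ s), if S t ω then (1 : ℝ) else 0)) :
    ∫ ω, (∑ t, if S t ω then miscover k Roff (R t) (αt t) ω else 0) /
        max 1 (∑ t, if S t ω then (1 : ℝ) else 0) ∂μ ≤ α := by
  have hαm : ∀ t, Measurable (αt t) := fun t =>
    (hαmeas t).mono
      (measurable_pi_lambda (fun ω (j : {j // j < t}) => S j ω) fun j => hS j).comap_le le_rfl
  have hαint : ∀ t, Integrable (αt t) μ := fun t =>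
    .of_bound (hαm t).aestronglyMeasurable 1 <| ae_of_all _ fun ω => by
      rw [Real.norm_of_nonneg (hα01 t ω).1.le]
      exact (hα01 t ω).2.le
  have hD := measurable_max_one_numSelected hS
  calc _ ≤ ∫ ω, (∑ t, αt t ω) / max 1 (numSelected fun j => S j ω) ∂μ :=
        integral_sum_selected_div_le hS (fun t => integrable_miscover hRoff (hR t) (hαm t))
          (fun _ => miscover_nonneg) hαint (fun t ω => (hα01 t ω).1.le) hM
    _ ≤ ∫ _, α ∂μ := by
        refine integral_mono_ae ((integrable_finsetSum _ fun t _ => hαint t).div_of_one_le hD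
          fun _ => le_max_left _ _) (integrable_const α) (hinv.mono fun ω h => ?_)
        have hall : univ.filter (· ≤ Fin.last T) = univ :=
          filter_true_of_mem fun t _ => Fin.le_last t
        rw [div_le_iff₀ (zero_lt_one.trans_le (le_max_left _ _))]
        have hlast := h (Fin.last T)
        rw [hall] at hlast
        exact hlast
    _ = α := by simp
end

section
/- Abstract FCR bound for LORD-type invariants: Let S_0,...,S_T ∈ {0,1} and α_0,...,α_T ∈ (0,1) be random variables such that (i) for each t, E[M_t | G_t] ≤ α_t almost surely for some sigma-algebra G_t with respect to which α_t and (S_0,...,S_T) are measurable, where M_t ∈ {0,1}; and (ii) ∑_{t=0}^T α_t ≤ α · max(1, ∑_{t=0}^T S_t) almost surely. Suppose additionally S_t M_t / max(1, ∑_j S_j) ≤ M_t / ∑_j S_j^{(t)} pointwise, where S^{(t)} is S with the t-th coordinate set to 1. Then E[∑_{t=0}^T S_t M_t / max(1, ∑_{j=0}^T S_j)] ≤ α. -/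
/-!
The weight `1 / ∑_j S_j^{(t)}` is `G_t`-measurable and lies in `(0, 1]`, so by the tower property
`E[M_t / ∑_j S_j^{(t)}] ≤ E[α_t / ∑_j S_j^{(t)}]`. Summing over `t`, the pointwise hypothesis bounds
the FCR by `E[∑_t α_t / ∑_j S_j^{(t)}]`, and since `∑_j S_j^{(t)} ≥ max(1, ∑_j S_j)` the invariant
bounds this integrand by `α`.
-/

lemma Real.mem_Icc_of_eq_zero_or_eq_one {x : ℝ} (h : x = 0 ∨ x = 1) : x ∈ Set.Icc (0 : ℝ) 1 := by
  rcases h with rfl | rfl <;> norm_num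

lemma max_one_sum_le_sum_ite {ι : Type*} [Fintype ι] [DecidableEq ι] {s : ι → ℝ}
    (hs : ∀ j, s j ∈ Set.Icc (0 : ℝ) 1) (t : ι) :
    max 1 (∑ j, s j) ≤ ∑ j, if j = t then 1 else s j := by
  refine max_le ?_ (Finset.sum_le_sum fun j _ => ?_)
  · calc (1 : ℝ) = if t = t then 1 else s t := by simp
      _ ≤ ∑ j, if j = t then 1 else s j :=
        Finset.single_le_sum (f := fun j => if j = t then 1 else s j)
          (fun j _ => by split_ifs <;> simp [(hs j).1]) (Finset.mem_univ t)
  · split_ifs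
    exacts [(hs j).2, le_rfl]

lemma Finset.sum_div_le_of_sum_le_mul {ι : Type*} (s : Finset ι) {a d : ι → ℝ} {c α : ℝ}
    (hc : 0 < c) (ha : ∀ i ∈ s, 0 ≤ a i) (hd : ∀ i ∈ s, c ≤ d i) (h : ∑ i ∈ s, a i ≤ α * c) :
    ∑ i ∈ s, a i / d i ≤ α :=
  calc ∑ i ∈ s, a i / d i ≤ ∑ i ∈ s, a i / c :=
        Finset.sum_le_sum fun i hi => div_le_div_of_nonneg_left (ha i hi) hc (hd i hi)
    _ = (∑ i ∈ s, a i) / c := (Finset.sum_div _ _ _).symm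
    _ ≤ α := (div_le_iff₀ hc).2 h

namespace MeasureTheory

variable {Ω : Type*} {m m0 : MeasurableSpace Ω} {μ : Measure Ω} {f h d : Ω → ℝ}

lemma Integrable.div_of_one_le_s13 (hf : Integrable f μ) (hd : AEMeasurable d μ)
    (hd1 : ∀ ω, 1 ≤ d ω) : Integrable (fun ω => f ω / d ω) μ :=
  hf.mul_bdd hd.inv.aestronglyMeasurable (c := 1) <| ae_of_all _ fun ω => by
    rw [Real.norm_of_nonneg (inv_nonneg.2 (zero_le_one.trans (hd1 ω)))]
    exact inv_le_one_of_one_le₀ (hd1 ω)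

theorem integral_div_le_of_condExp_le (hm : m ≤ m0) [IsFiniteMeasure μ]
    (hd : Measurable[m] d) (hd1 : ∀ ω, 1 ≤ d ω)
    (hf : Integrable f μ) (hh : Integrable h μ) (hfh : μ[f | m] ≤ᵐ[μ] h) :
    ∫ ω, f ω / d ω ∂μ ≤ ∫ ω, h ω / d ω ∂μ := by
  have hd_meas : AEMeasurable d μ := (hd.mono hm le_rfl).aemeasurable
  calc ∫ ω, f ω / d ω ∂μ = ∫ ω, (μ[f * d⁻¹ | m]) ω ∂μ := (integral_condExp hm).symm
    _ = ∫ ω, (μ[f | m]) ω / d ω ∂μ :=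
        integral_congr_ae (condExp_mul_of_stronglyMeasurable_right hd.inv.stronglyMeasurable
          (hf.div_of_one_le_s13 hd_meas hd1) hf)
    _ ≤ ∫ ω, h ω / d ω ∂μ :=
        integral_mono_ae (integrable_condExp.div_of_one_le_s13 hd_meas hd1)
          (hh.div_of_one_le_s13 hd_meas hd1)
          (hfh.mono fun ω hω => div_le_div_of_nonneg_right hω (zero_le_one.trans (hd1 ω)))

end MeasureTheory

open MeasureTheory

theorem abstract_lord_FCR_bound_general
    {Ω : Type*} [m0 : MeasurableSpace Ω] (μ : Measure Ω) [IsProbabilityMeasure μ]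
    (T : ℕ) (S M αt : Fin (T + 1) → Ω → ℝ)
    (G : Fin (T + 1) → MeasurableSpace Ω) (hG : ∀ t, G t ≤ m0)
    (hMmeas : ∀ t, Measurable (M t))
    (hS01 : ∀ t ω, S t ω = 0 ∨ S t ω = 1) (hM01 : ∀ t ω, M t ω = 0 ∨ M t ω = 1)
    (hα01 : ∀ t ω, αt t ω ∈ Set.Ioo (0 : ℝ) 1)
    (hαG : ∀ t, Measurable[G t] (αt t)) (hSG : ∀ t j, Measurable[G t] (S j))
    (hcond : ∀ t, (μ[M t | G t]) ≤ᵐ[μ] αt t)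
    (α : ℝ)
    (hinv : ∀ᵐ ω ∂μ, ∑ t, αt t ω ≤ α * max 1 (∑ t, S t ω))
    (hpt : ∀ (t : Fin (T + 1)) ω,
      S t ω * M t ω / max 1 (∑ j, S j ω) ≤
        M t ω / (∑ j, if j = t then 1 else S j ω)) :
    ∫ ω, (∑ t, S t ω * M t ω) / max 1 (∑ j, S j ω) ∂μ ≤ α := by
  set D : Fin (T + 1) → Ω → ℝ := fun t ω => ∑ j, if j = t then 1 else S j ω
  have hSI t ω := Real.mem_Icc_of_eq_zero_or_eq_one (hS01 t ω)
  have hMI t ω := Real.mem_Icc_of_eq_zero_or_eq_one (hM01 t ω)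
  have hmax_pos ω : (0 : ℝ) < max 1 (∑ j, S j ω) := zero_lt_one.trans_le (le_max_left _ _)
  have hmaxD t ω : max 1 (∑ j, S j ω) ≤ D t ω := max_one_sum_le_sum_ite (hSI · ω) t
  have hD1 t ω : 1 ≤ D t ω := (le_max_left _ _).trans (hmaxD t ω)
  have hDG t : Measurable[G t] (D t) :=
    Finset.measurable_sum _ fun j _ => by
      split_ifs
      exacts [measurable_const, hSG t j]
  have hD_meas t : AEMeasurable (D t) μ := ((hDG t).mono (hG t) le_rfl).aemeasurable
  have hM_int t : Integrable (M t) μ :=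
    .of_mem_Icc 0 1 (hMmeas t).aemeasurable (ae_of_all _ (hMI t))
  have hα_int t : Integrable (αt t) μ :=
    .of_mem_Icc 0 1 ((hαG t).mono (hG t) le_rfl).aemeasurable
      (ae_of_all _ fun ω => Set.Ioo_subset_Icc_self (hα01 t ω))
  have hMD_int t := (hM_int t).div_of_one_le_s13 (hD_meas t) (hD1 t)
  have hαD_int t := (hα_int t).div_of_one_le_s13 (hD_meas t) (hD1 t)
  calc ∫ ω, (∑ t, S t ω * M t ω) / max 1 (∑ j, S j ω) ∂μ
      ≤ ∫ ω, ∑ t, M t ω / D t ω ∂μ := by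
        refine integral_mono_of_nonneg (ae_of_all _ fun ω => ?_)
          (integrable_finsetSum _ fun t _ => hMD_int t) (ae_of_all _ fun ω => ?_)
        · exact div_nonneg (Finset.sum_nonneg fun t _ => mul_nonneg (hSI t ω).1 (hMI t ω).1)
            (hmax_pos ω).le
        · simpa only [Finset.sum_div] using Finset.sum_le_sum fun t _ => hpt t ω
    _ = ∑ t, ∫ ω, M t ω / D t ω ∂μ := integral_finsetSum _ fun t _ => hMD_int t
    _ ≤ ∑ t, ∫ ω, αt t ω / D t ω ∂μ := Finset.sum_le_sum fun t _ =>
        integral_div_le_of_condExp_le (hG t) (hDG t) (hD1 t) (hM_int t) (hα_int t) (hcond t)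
    _ = ∫ ω, ∑ t, αt t ω / D t ω ∂μ := (integral_finsetSum _ fun t _ => hαD_int t).symm
    _ ≤ ∫ _, α ∂μ :=
        integral_mono_ae (integrable_finsetSum _ fun t _ => hαD_int t) (integrable_const α)
          (hinv.mono fun ω hω => Finset.sum_div_le_of_sum_le_mul _ (hmax_pos ω)
            (fun t _ => (hα01 t ω).1.le) (fun t _ => hmaxD t ω) hω)
    _ = α := by simp

/-- **Abstract FCR bound for LORD-type invariants.** `S t ∈ {0,1}` are selections,
`M t ∈ {0,1}` miscoverage indicators, `αt t ∈ (0,1)` the spent error budget with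
`E[M_t ∣ G_t] ≤ α_t` a.s. for a sigma-algebra `G_t` w.r.t. which `α_t` and all the
`S_j` are measurable; the invariant `∑ α_t ≤ α · max(1, ∑ S_t)` holds a.s.; and
pointwise `S_t M_t / max(1, ∑_j S_j) ≤ M_t / ∑_j S_j^{(t)}`, where `S^{(t)}` is `S`
with its `t`-th coordinate set to `1`.  Then the FCR is at most `α`. -/
theorem abstract_lord_FCR_bound
    {Ω : Type*} [m0 : MeasurableSpace Ω] (μ : Measure Ω) [IsProbabilityMeasure μ]
    (T : ℕ) (S M αt : Fin (T + 1) → Ω → ℝ)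
    (G : Fin (T + 1) → MeasurableSpace Ω) (hG : ∀ t, G t ≤ m0)
    (hSmeas : ∀ t, Measurable (S t)) (hMmeas : ∀ t, Measurable (M t))
    (hS01 : ∀ t ω, S t ω = 0 ∨ S t ω = 1) (hM01 : ∀ t ω, M t ω = 0 ∨ M t ω = 1)
    (hα01 : ∀ t ω, αt t ω ∈ Set.Ioo (0 : ℝ) 1)
    (hαG : ∀ t, Measurable[G t] (αt t)) (hSG : ∀ t j, Measurable[G t] (S j))
    (hcond : ∀ t, (μ[M t | G t]) ≤ᵐ[μ] αt t)
    (α : ℝ)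
    (hinv : ∀ᵐ ω ∂μ, ∑ t, αt t ω ≤ α * max 1 (∑ t, S t ω))
    (hpt : ∀ (t : Fin (T + 1)) ω,
      S t ω * M t ω / max 1 (∑ j, S j ω) ≤
        M t ω / (∑ j, if j = t then 1 else S j ω)) :
    ∫ ω, (∑ t, S t ω * M t ω) / max 1 (∑ j, S j ω) ∂μ ≤ α :=
  abstract_lord_FCR_bound_general (m0 := m0) μ T S M αt G hG hMmeas hS01 hM01 hα01 hαG hSG hcond α
    hinv hpt
end

section
/- For the ACI update α_t = α_{t-1} + γ(α − M_{t-1}) with step size γ > 0, where M_{t-1} = 1{Y_{t-1} ∉ Ĉ_{t-1}(X_{t-1}, α_{t-1})} ∈ {0,1}, assume that α_t ∈ [−γ, 1+γ] for all t (which follows inductively from α_1 ∈ [0,1]). Then for all T ≥ 1, |(1/T) ∑_{t=1}^T M_t − α| ≤ (max(α_1, 1−α_1) + γ)/(Tγ) almost surely. -/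
/-! The update telescopes: `α_{T+1} = α_1 + γ ∑_{t ≤ T} (α − M_t)`, so `∑_{t ≤ T} (M_t − α)` equals
`(α_1 − α_{T+1}) / γ`, and the a priori bound `α_{T+1} ∈ [−γ, 1 + γ]` controls the numerator by
`max(α_1, 1 − α_1) + γ`. -/

open Finset

theorem sum_Icc_eq_sub_of_succ {G : Type*} [AddCommGroup G] {a d : ℕ → G}
    (hrec : ∀ t, 1 ≤ t → a (t + 1) = a t + d t) (T : ℕ) :
    ∑ t ∈ Icc 1 T, d t = a (T + 1) - a 1 := by
  rw [← Ico_add_one_right_eq_Icc, ← sum_Ico_sub (f := a) (by omega : 1 ≤ T + 1)]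
  refine sum_congr rfl fun t ht => ?_
  rw [hrec t (mem_Ico.mp ht).1, add_sub_cancel_left]

theorem abs_sub_le_max_add_of_mem_Icc {x y c : ℝ} (hx : x ∈ Set.Icc (-c) (1 + c)) :
    |y - x| ≤ max y (1 - y) + c := by
  obtain ⟨hlo, hhi⟩ := hx
  rw [abs_le]
  constructor <;> linarith [le_max_left y (1 - y), le_max_right y (1 - y)]

theorem aci_miscoverage_bound_general (γ α : ℝ) (hγ : 0 < γ)
    (M : ℕ → ℝ)
    (a : ℕ → ℝ)
    (hrec : ∀ t, 1 ≤ t → a (t + 1) = a t + γ * (α - M t))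
    (hbnd : ∀ t, 1 ≤ t → a t ∈ Set.Icc (-γ) (1 + γ)) :
    ∀ T : ℕ, 1 ≤ T →
      |(1 / (T : ℝ)) * (∑ t ∈ Finset.Icc 1 T, M t) - α| ≤
        (max (a 1) (1 - a 1) + γ) / ((T : ℝ) * γ) := by
  intro T hT
  have hTpos : (0 : ℝ) < T := by exact_mod_cast hT
  have htel : γ * ∑ t ∈ Icc 1 T, (α - M t) = a (T + 1) - a 1 := by
    rw [mul_sum]
    exact sum_Icc_eq_sub_of_succ hrec T
  have hmean : (1 / (T : ℝ)) * (∑ t ∈ Icc 1 T, M t) - α = (a 1 - a (T + 1)) / (T * γ) := by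
    rw [sum_sub_distrib, sum_const, Nat.card_Icc, Nat.add_sub_cancel, nsmul_eq_mul] at htel
    field_simp
    linarith
  rw [hmean, abs_div, abs_of_pos (by positivity : (0 : ℝ) < T * γ)]
  exact div_le_div_of_nonneg_right (abs_sub_le_max_add_of_mem_Icc (hbnd (T + 1) (by omega)))
    (by positivity)

/-- **ACI deterministic miscoverage bound.** For the ACI update
`α_{t+1} = α_t + γ(α − M_t)` with step size `γ > 0`, `M_t ∈ {0,1}`, and the a priori
bound `α_t ∈ [−γ, 1+γ]` for all `t ≥ 1`, we have, for all `T ≥ 1`,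
`|(1/T) ∑_{t=1}^T M_t − α| ≤ (max(α_1, 1−α_1) + γ)/(Tγ)`. -/
theorem aci_miscoverage_bound (γ α : ℝ) (hγ : 0 < γ)
    (M : ℕ → ℝ) (hM : ∀ t, M t = 0 ∨ M t = 1)
    (a : ℕ → ℝ)
    (hrec : ∀ t, 1 ≤ t → a (t + 1) = a t + γ * (α - M t))
    (hbnd : ∀ t, 1 ≤ t → a t ∈ Set.Icc (-γ) (1 + γ)) :
    ∀ T : ℕ, 1 ≤ T →
      |(1 / (T : ℝ)) * (∑ t ∈ Finset.Icc 1 T, M t) - α| ≤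
        (max (a 1) (1 - a 1) + γ) / ((T : ℝ) * γ) :=
  aci_miscoverage_bound_general γ α hγ M a hrec hbnd
end

section
/- Under the ACI update α_t = α_{t-1} + γ(α − M_{t-1}) with M_t ∈ {0,1} and γ > 0, if α_1 ∈ [0,1] then α_t ∈ [−γ, 1+γ] for all t ≥ 1. -/
/-!
One ACI step moves `α_t` by at most `γ`, upwards when `α_t ≤ 0` and downwards when `α_t ≥ 1`.
So the iterates can overshoot `[0, 1]` by at most `γ` and are then pushed back.
-/

lemma aci_step_mem_Icc {γ α x m : ℝ} (hγ : 0 ≤ γ) (hα : α ∈ Set.Icc (0 : ℝ) 1)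
    (hm : m = 0 ∨ m = 1) (hm0 : x ≤ 0 → m = 0) (hm1 : 1 ≤ x → m = 1)
    (hx : x ∈ Set.Icc (-γ) (1 + γ)) :
    x + γ * (α - m) ∈ Set.Icc (-γ) (1 + γ) := by
  obtain ⟨hα0, hα1⟩ := hα
  obtain ⟨hxl, hxu⟩ := hx
  have hγα : 0 ≤ γ * α := mul_nonneg hγ hα0
  have hγα' : γ * α ≤ γ := mul_le_of_le_one_right hγ hα1
  rcases hm with rfl | rfl
  · have hx1 : x < 1 := lt_of_not_ge fun h => one_ne_zero (hm1 h).symm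
    constructor <;> linarith
  · have hx0 : 0 < x := lt_of_not_ge fun h => one_ne_zero (hm0 h)
    constructor <;> linarith

/-- **A priori bound for the ACI recursion.** Under the ACI update
`α_{t+1} = α_t + γ(α − M_t)` with `M_t ∈ {0,1}`, `γ > 0`, `α ∈ (0,1)`,
`M_t = 0` whenever `α_t ≤ 0` (the interval is the whole space) and `M_t = 1`
whenever `α_t ≥ 1` (the interval is empty), if `α_1 ∈ [0,1]` then
`α_t ∈ [−γ, 1+γ]` for all `t ≥ 1`. -/
theorem aci_a_priori_bound (γ α : ℝ) (hγ : 0 < γ) (hα : α ∈ Set.Ioo (0 : ℝ) 1)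
    (M : ℕ → ℝ) (hM : ∀ t, M t = 0 ∨ M t = 1)
    (a : ℕ → ℝ)
    (hrec : ∀ t, 1 ≤ t → a (t + 1) = a t + γ * (α - M t))
    (hM0 : ∀ t, 1 ≤ t → a t ≤ 0 → M t = 0)
    (hM1 : ∀ t, 1 ≤ t → 1 ≤ a t → M t = 1)
    (h1 : a 1 ∈ Set.Icc (0 : ℝ) 1) :
    ∀ t, 1 ≤ t → a t ∈ Set.Icc (-γ) (1 + γ) := by
  intro t ht
  induction t, ht using Nat.le_induction with
  | base => exact Set.Icc_subset_Icc (by linarith) (by linarith) h1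
  | succ t ht ih =>
    rw [hrec t ht]
    exact aci_step_mem_Icc hγ.le (Set.Ioo_subset_Icc_self hα) (hM t) (hM0 t ht) (hM1 t ht) ih
end

section
/- Counterexample structure for the adaptive strategy (ADA): Let t > s ≥ 0 and let π be the transposition swapping s and t. Suppose j ∈ {0,...,t-1}, j ≠ s, is selected into the ADA calibration set at time t, i.e., S_t(X_j)·1{S_j(X_j) = S_j(X_t)} = 1, and that S_s(X_s) = S_s(X_t) (so s is also in the calibration set). Even if the permuted rule sequence equals the original rule sequence, the symmetry condition for ADA requires S_j(X_{π(j)}) = S_j(X_{π(t)}), i.e., S_j(X_j) = S_j(X_s); there exist decision-driven rule sequences and data for which S_j(X_j) = S_j(X_t) holds but S_j(X_j) = S_j(X_s) fails, so ADA does not satisfy the symmetry condition (S) in general. -/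
/-- The augmented ADA calibration set at time `t`: an online index `j < t` is selected
iff `S_t(x_j) = 1` and `S_j(x_j) = S_j(x_t)`; the test index `t` belongs to the set iff
`S_t(x_t) = 1`. -/
def adaSet (g : (t : ℕ) → (Fin t → Bool) → ℕ → Bool) (x : ℕ → ℕ) (t : ℕ) : Set ℕ :=
  {j | (j < t ∧ rules g x t (x j) = true ∧ rules g x j (x j) = rules g x j (x t)) ∨
    (j = t ∧ rules g x t (x t) = true)}

/- Take rules that ignore the history: `S_1` rejects the value `0` and every other rule accepts
everything, with data `x = id`, `s = 0`, `t = 2`, `j = 1`. Then `S_1(x_1) = S_1(x_2)`, so `1` is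
selected at time `2`, but `S_1(x_1) ≠ S_1(x_0)`. Swapping `0` and `2` moves the value `0` to time
`2`, after which `S_1(x_1) ≠ S_1(x_2)` and `1` drops out of the calibration set. -/

theorem rules_eq_of_history_independent {X : Type*} {g : (t : ℕ) → (Fin t → Bool) → X → Bool}
    {f : ℕ → X → Bool} (hg : ∀ t hist, g t hist = f t) (x : ℕ → X) : rules g x = f := by
  funext t
  rw [rules, hg]

section adaSet

variable {g : (t : ℕ) → (Fin t → Bool) → ℕ → Bool} {x : ℕ → ℕ} {j t : ℕ}

theorem mem_adaSet_iff_of_lt (hj : j < t) :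
    j ∈ adaSet g x t ↔ rules g x t (x j) = true ∧ rules g x j (x j) = rules g x j (x t) := by
  simp [adaSet, hj, hj.ne]

theorem self_mem_adaSet_iff : t ∈ adaSet g x t ↔ rules g x t (x t) = true := by
  simp [adaSet]

end adaSet

def rejectZeroAtOne (t y : ℕ) : Bool :=
  !(t == 1 && y == 0)

/-- **ADA does not satisfy the symmetry condition (S).** There exist a decision-driven
rule mechanism, data, indices `s < t`, and an online index `j` selected by ADA at time
`t` (so `S_t(x_j) = 1` and `S_j(x_j) = S_j(x_t)`), with `s` also in the calibration set
(`S_s(x_s) = S_s(x_t)`), such that `S_j(x_j) ≠ S_j(x_s)`; consequently, the ADA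
calibration set is not invariant under the transposition swapping `s` and `t`. -/
theorem ada_not_symmetric :
    ∃ (g : (t : ℕ) → (Fin t → Bool) → ℕ → Bool) (x : ℕ → ℕ) (s t j : ℕ),
      s < t ∧ j < t ∧ j ≠ s ∧
      s ∈ adaSet g x t ∧ t ∈ adaSet g x t ∧
      rules g x t (x j) = true ∧ rules g x j (x j) = rules g x j (x t) ∧
      rules g x s (x s) = rules g x s (x t) ∧
      rules g x j (x j) ≠ rules g x j (x s) ∧
      adaSet g (fun i => x (Equiv.swap s t i)) t ≠ adaSet g x t := by
  let g : (t : ℕ) → (Fin t → Bool) → ℕ → Bool := fun t _ => rejectZeroAtOne t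
  have hg (x : ℕ → ℕ) : rules g x = rejectZeroAtOne :=
    rules_eq_of_history_independent (g := g) (fun _ _ => rfl) x
  have h_mem : 1 ∈ adaSet g id 2 := by
    rw [mem_adaSet_iff_of_lt (by norm_num), hg]
    decide
  have h_not_mem_swap : 1 ∉ adaSet g (fun i => id (Equiv.swap 0 2 i)) 2 := by
    rw [mem_adaSet_iff_of_lt (by norm_num), hg]
    decide
  refine ⟨g, id, 0, 2, 1, by norm_num, by norm_num, by norm_num, ?_, ?_, ?_, ?_, ?_, ?_, ?_⟩
  · rw [mem_adaSet_iff_of_lt (by norm_num), hg]; decide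
  · rw [self_mem_adaSet_iff, hg]; decide
  · rw [hg]; decide
  · rw [hg]; decide
  · rw [hg]; decide
  · rw [hg]; decide
  · exact fun h => h_not_mem_swap (h ▸ h_mem)
end

section
/- Selection-conditional coverage of conformal intervals from exchangeable calibration: Let {R_i}_{i ∈ D} ∪ {R_t} be exchangeable conditional on an event E with P(E) > 0, where D is a finite set with |D| = m. Let Q̂ = Q̂_{1−α}({R_i}_{i∈D}) be the ⌈(m+1)(1−α)⌉-th smallest of {R_i}_{i∈D} (set to +∞ if ⌈(m+1)(1−α)⌉ > m), and define Ĉ = {y : R(X_t, y) ≤ Q̂}. Then P(R_t ≤ Q̂ | E) ≥ 1−α. -/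
open MeasureTheory ProbabilityTheory ENNReal

/-- The `k`-th smallest value of `z₁,…,z_m` (as `inf {q : #{i : z i ≤ q} ≥ k}`),
valued in `EReal` so that it is `⊤` when `k > m`. -/
noncomputable def empQuantileCount (m : ℕ) (z : Fin m → ℝ) (k : ℕ) : EReal :=
  sInf {q : EReal | k ≤ (Finset.univ.filter (fun i => (z i : EReal) ≤ q)).card}

/-- Number of coordinates strictly below `z i`. -/
noncomputable def rankLT {n : ℕ} (z : Fin n → ℝ) (i : Fin n) : ℕ :=
  (Finset.univ.filter (fun j => z j < z i)).card

lemma rankLT_comp {n : ℕ} (z : Fin n → ℝ) (σ : Equiv.Perm (Fin n)) (i : Fin n) :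
    rankLT (z ∘ σ) i = rankLT z (σ i) := by
  unfold rankLT
  apply Finset.card_bij (fun j _ => σ j)
  · intro a ha
    simp only [Finset.mem_filter, Finset.mem_univ, true_and] at ha ⊢
    exact ha
  · intro a _ b _ h
    exact σ.injective h
  · intro b hb
    refine ⟨σ.symm b, ?_, by simp⟩
    simp only [Finset.mem_filter, Finset.mem_univ, true_and, Function.comp_apply,
      Equiv.apply_symm_apply] at hb ⊢
    exact hb

lemma le_empQuantileCount_iff {m : ℕ} (k : ℕ) (hk : 1 ≤ k) (z : Fin m → ℝ) (x : ℝ) :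
    (x : EReal) ≤ empQuantileCount m z k ↔
      (Finset.univ.filter (fun i => z i < x)).card < k := by
  constructor
  · intro h
    by_contra hc
    push_neg at hc
    set F := Finset.univ.filter (fun i => z i < x) with hF
    have hFne : (F.image z).Nonempty := by
      refine Finset.Nonempty.image ?_ z
      exact Finset.card_pos.mp (lt_of_lt_of_le hk hc)
    set q0 : ℝ := (F.image z).max' hFne with hq0
    have hq0lt : q0 < x := by
      obtain ⟨i, hi, hzi⟩ := Finset.mem_image.mp ((F.image z).max'_mem hFne)
      show (F.image z).max' hFne < x
      rw [← hzi]
      exact (Finset.mem_filter.mp hi).2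
    have hmem : (q0 : EReal) ∈
        {q : EReal | k ≤ (Finset.univ.filter (fun i => (z i : EReal) ≤ q)).card} := by
      refine le_trans hc (Finset.card_le_card ?_)
      intro i hi
      simp only [Finset.mem_filter, Finset.mem_univ, true_and] at hi ⊢
      exact EReal.coe_le_coe_iff.mpr
        (Finset.le_max' _ _ (Finset.mem_image_of_mem z hi))
    have := le_trans h (sInf_le hmem)
    exact absurd (lt_of_le_of_lt this (EReal.coe_lt_coe_iff.mpr hq0lt)) (lt_irrefl _)
  · intro h
    apply le_sInf
    intro q hq
    by_contra hqx
    push_neg at hqx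
    have hsub : (Finset.univ.filter (fun i => (z i : EReal) ≤ q)) ⊆
        Finset.univ.filter (fun i => z i < x) := by
      intro i hi
      simp only [Finset.mem_filter, Finset.mem_univ, true_and] at hi ⊢
      exact EReal.coe_lt_coe_iff.mp (lt_of_le_of_lt hi hqx)
    exact absurd (lt_of_le_of_lt (le_trans hq (Finset.card_le_card hsub)) h) (lt_irrefl _)

lemma card_rankLT_lt {n : ℕ} (k : ℕ) (z : Fin n → ℝ) :
    min k n ≤ (Finset.univ.filter (fun i => rankLT z i < k)).card := by
  set σ := Tuple.sort z with hσ
  have hmono := Tuple.monotone_sort z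
  have key : ∀ i : Fin n, (i : ℕ) < k → rankLT z (σ i) < k := by
    intro i hi
    have h1 : rankLT z (σ i) = rankLT (z ∘ σ) i := (rankLT_comp z σ i).symm
    rw [h1]
    have hsub : (Finset.univ.filter (fun j => (z ∘ σ) j < (z ∘ σ) i)) ⊆ Finset.Iio i := by
      intro j hj
      simp only [Finset.mem_filter, Finset.mem_univ, true_and] at hj
      rw [Finset.mem_Iio]
      by_contra hij
      push_neg at hij
      exact absurd (hmono hij) (not_le.mpr hj)
    calc rankLT (z ∘ σ) i ≤ (Finset.Iio i).card := Finset.card_le_card hsub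
      _ = (i : ℕ) := by simp [Fin.card_Iio]
      _ < k := hi
  rcases le_or_gt k n with hkn | hkn
  · rw [min_eq_left hkn]
    have : (Finset.univ : Finset (Fin k)).card ≤
        (Finset.univ.filter (fun i => rankLT z i < k)).card := by
      apply Finset.card_le_card_of_injOn (fun j => σ (Fin.castLE hkn j))
      · intro j _
        simp only [Finset.coe_filter, Finset.mem_coe, Finset.mem_filter, Finset.mem_univ, true_and,
          Set.mem_setOf_eq]
        exact key (Fin.castLE hkn j) j.2
      · intro a _ b _ h
        exact Fin.castLE_injective hkn (σ.injective h)
    simpa using this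
  · rw [min_eq_right (le_of_lt hkn)]
    have : (Finset.univ.filter (fun i => rankLT z i < k)) = Finset.univ := by
      apply Finset.filter_true_of_mem
      intro i _
      calc rankLT z i ≤ (Finset.univ.erase i).card := by
            apply Finset.card_le_card
            intro j hj
            simp only [Finset.mem_filter, Finset.mem_univ, true_and] at hj
            exact Finset.mem_erase.mpr ⟨fun h => absurd hj (by simp [h]), Finset.mem_univ j⟩
        _ = n - 1 := by simp
        _ < k := lt_of_le_of_lt (Nat.sub_le n 1) hkn
    rw [this]
    simp

lemma measurable_rankLT {n : ℕ} (i : Fin n) (k : ℕ) :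
    MeasurableSet {z : Fin n → ℝ | rankLT z i < k} := by
  have hm : Measurable (fun z : Fin n → ℝ => rankLT z i) := by
    unfold rankLT
    simp_rw [Finset.card_filter]
    apply Finset.measurable_sum
    intro j _
    exact Measurable.ite (measurableSet_lt (measurable_pi_apply j) (measurable_pi_apply i))
      measurable_const measurable_const
  have : {z : Fin n → ℝ | rankLT z i < k} = (fun z => rankLT z i) ⁻¹' {a | a < k} := rfl
  rw [this]
  exact hm (by trivial)

lemma card_castSucc (m : ℕ) (z : Fin (m + 1) → ℝ) :
    (Finset.univ.filter (fun i : Fin m => z i.castSucc < z (Fin.last m))).card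
      = rankLT z (Fin.last m) := by
  unfold rankLT
  rw [Finset.card_filter, Finset.card_filter, Fin.sum_univ_castSucc]
  simp


/-- **Selection-conditional coverage of split conformal prediction.** If the
calibration scores `R₁,…,R_m` together with the test score `R_{m+1}` are exchangeable
conditionally on an event `E` of positive probability, then the test score is below
the `⌈(m+1)(1−α)⌉`-th smallest calibration score (interpreted as `+∞` when this index
exceeds `m`) with conditional probability at least `1 − α`; equivalently
`P(Y_t ∈ Ĉ ∣ E) ≥ 1 − α`. -/
theorem selection_conditional_coverage
    {Ω : Type*} [MeasurableSpace Ω] (μ : Measure Ω) [IsProbabilityMeasure μ]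
    (E : Set Ω) (hE : μ E ≠ 0) (m : ℕ)
    (R : Fin (m + 1) → Ω → ℝ) (hR : ∀ i, Measurable (R i))
    (hexch : ∀ σ : Equiv.Perm (Fin (m + 1)),
      Measure.map (fun ω i => R (σ i) ω) (μ[|E]) =
        Measure.map (fun ω i => R i ω) (μ[|E]))
    (α : ℝ) (hα : α ∈ Set.Ioo (0 : ℝ) 1) :
    ENNReal.ofReal (1 - α) ≤
      μ[|E] {ω | (R (Fin.last m) ω : EReal) ≤
        empQuantileCount m (fun i : Fin m => R i.castSucc ω)
          (⌈((m : ℝ) + 1) * (1 - α)⌉.toNat)} := by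
  obtain ⟨hα0, hα1⟩ := hα
  set ν := μ[|E] with hν
  haveI : IsProbabilityMeasure ν := cond_isProbabilityMeasure hE
  set k : ℕ := (⌈((m : ℝ) + 1) * (1 - α)⌉).toNat with hkdef
  have hpos : (0 : ℝ) < ((m : ℝ) + 1) * (1 - α) := by
    have : (0:ℝ) < (m:ℝ) + 1 := by positivity
    nlinarith
  have hceil : (0 : ℤ) < ⌈((m : ℝ) + 1) * (1 - α)⌉ := Int.ceil_pos.mpr hpos
  have hk1 : 1 ≤ k := by omega
  set V : Ω → (Fin (m + 1) → ℝ) := fun ω i => R i ω with hVdef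
  have hV : Measurable V := measurable_pi_lambda _ hR
  set B : Fin (m + 1) → Set Ω := fun i => V ⁻¹' {z | rankLT z i < k} with hBdef
  have hBmeas : ∀ i, MeasurableSet (B i) := fun i => hV (measurable_rankLT i k)
  have hcards : ∀ ω : Ω,
      (Finset.univ.filter (fun i : Fin m => R i.castSucc ω < R (Fin.last m) ω)).card
        = rankLT (V ω) (Fin.last m) := fun ω => card_castSucc m (V ω)
  have hevent : {ω | (R (Fin.last m) ω : EReal) ≤
        empQuantileCount m (fun i : Fin m => R i.castSucc ω) k} = B (Fin.last m) := by
    ext ω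
    simp only [Set.mem_setOf_eq, hBdef, Set.mem_preimage]
    rw [le_empQuantileCount_iff k hk1, hcards ω]
  have hswap : ∀ i : Fin (m + 1), ν (B (Fin.last m)) = ν (B i) := by
    intro i
    set σ : Equiv.Perm (Fin (m + 1)) := Equiv.swap i (Fin.last m) with hσ
    have hVσ : Measurable (fun ω (j : Fin (m + 1)) => R (σ j) ω) :=
      measurable_pi_lambda _ (fun j => hR (σ j))
    have hAi : MeasurableSet {z : Fin (m + 1) → ℝ | rankLT z i < k} := measurable_rankLT i k
    have h1 : ν ((fun ω (j : Fin (m + 1)) => R (σ j) ω) ⁻¹' {z | rankLT z i < k})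
        = ν (V ⁻¹' {z | rankLT z i < k}) := by
      rw [← Measure.map_apply hVσ hAi, ← Measure.map_apply hV hAi, hexch σ]
    have h2 : (fun ω (j : Fin (m + 1)) => R (σ j) ω) ⁻¹' {z | rankLT z i < k}
        = B (σ i) := by
      ext ω
      simp only [Set.mem_preimage, Set.mem_setOf_eq, hBdef]
      have : rankLT (fun j => R (σ j) ω) i = rankLT (V ω) (σ i) := rankLT_comp (V ω) σ i
      rw [this]
    rw [h2] at h1
    have hσi : σ i = Fin.last m := Equiv.swap_apply_left i (Fin.last m)
    rw [hσi] at h1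
    exact h1
  have hsum : ((min k (m + 1) : ℕ) : ℝ≥0∞) ≤ ∑ i : Fin (m + 1), ν (B i) := by
    have h1 : ∀ i : Fin (m + 1), ν (B i) = ∫⁻ ω, (B i).indicator 1 ω ∂ν :=
      fun i => (lintegral_indicator_one (hBmeas i)).symm
    simp_rw [h1]
    rw [← lintegral_finset_sum _ (fun i _ => measurable_one.indicator (hBmeas i))]
    have h2 : ∀ ω : Ω, ((min k (m + 1) : ℕ) : ℝ≥0∞)
        ≤ ∑ i : Fin (m + 1), (B i).indicator (1 : Ω → ℝ≥0∞) ω := by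
      intro ω
      have h3 : ∑ i : Fin (m + 1), (B i).indicator (1 : Ω → ℝ≥0∞) ω
          = ((Finset.univ.filter (fun i : Fin (m + 1) => rankLT (V ω) i < k)).card : ℝ≥0∞) := by
        rw [Finset.card_filter, Nat.cast_sum]
        apply Finset.sum_congr rfl
        intro i _
        by_cases h : rankLT (V ω) i < k <;>
          simp [Set.indicator_apply, hBdef, Set.mem_preimage, Set.mem_setOf_eq, h]
      rw [h3]
      exact Nat.cast_le.mpr (card_rankLT_lt k (V ω))
    calc ((min k (m + 1) : ℕ) : ℝ≥0∞)
        = ∫⁻ _, ((min k (m + 1) : ℕ) : ℝ≥0∞) ∂ν := by simp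
      _ ≤ _ := lintegral_mono h2
  have hconst : ∑ i : Fin (m + 1), ν (B i) = ((m : ℝ≥0∞) + 1) * ν (B (Fin.last m)) := by
    rw [Finset.sum_congr rfl (fun i _ => (hswap i).symm), Finset.sum_const]
    simp [nsmul_eq_mul]
  have hknn : (k : ℝ) = (⌈((m : ℝ) + 1) * (1 - α)⌉ : ℤ) := by
    rw [hkdef]
    exact_mod_cast Int.toNat_of_nonneg (le_of_lt hceil)
  have hreal : (1 - α) * ((m : ℝ) + 1) ≤ ((min k (m + 1) : ℕ) : ℝ) := by
    rw [Nat.cast_min]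
    apply le_min
    · have h4 := Int.le_ceil (((m : ℝ) + 1) * (1 - α))
      rw [← hknn] at h4
      nlinarith
    · push_cast
      nlinarith
  have key : ENNReal.ofReal (1 - α) * ((m : ℝ≥0∞) + 1)
      ≤ ((m : ℝ≥0∞) + 1) * ν (B (Fin.last m)) := by
    calc ENNReal.ofReal (1 - α) * ((m : ℝ≥0∞) + 1)
        = ENNReal.ofReal ((1 - α) * ((m : ℝ) + 1)) := by
          rw [ENNReal.ofReal_mul (by linarith)]
          congr 1
          rw [ENNReal.ofReal_add (Nat.cast_nonneg m) zero_le_one, ENNReal.ofReal_natCast,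
            ENNReal.ofReal_one]
      _ ≤ ((min k (m + 1) : ℕ) : ℝ≥0∞) := by
          rw [← ENNReal.ofReal_natCast]
          exact ENNReal.ofReal_le_ofReal hreal
      _ ≤ ∑ i : Fin (m + 1), ν (B i) := hsum
      _ = ((m : ℝ≥0∞) + 1) * ν (B (Fin.last m)) := hconst
  rw [hevent]
  have hne0 : ((m : ℝ≥0∞) + 1) ≠ 0 := by simp
  have hnetop : ((m : ℝ≥0∞) + 1) ≠ ⊤ := by
    simp [ENNReal.add_eq_top]
  rw [mul_comm] at key
  exact (ENNReal.mul_le_mul_iff_right hne0 hnetop).mp key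
end
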